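/- arXiv:math/0509656 — 11 statements merged into one kernel-verified Lean document; each statement's English description precedes it below -/
import Mathlib

section
/- Let Γ : ℝⁿ × ℝⁿ → ℝⁿ be a symmetric bilinear map, identify Γ with the linear map v ↦ Γ(v,·) into the endomorphisms of ℝⁿ, and let S be the range of this linear map. Let g₀ be a nondegenerate symmetric bilinear form on ℝⁿ. Then the operator exp(Γ(v)) · [Γ(w₁), Γ(w₂)] · exp(-Γ(v)) is g₀-anti-symmetric for all v, w₁, w₂ ∈ ℝⁿ if and only if (ad_X)^k([Y, Z]) is g₀-anti-symmetric for all X, Y, Z ∈ S and all integers k ≥ 0. -/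
open NormedSpace Nat

section Aux

variable {𝔸 : Type*} [NormedRing 𝔸] [NormedAlgebra ℝ 𝔸] [CompleteSpace 𝔸]

/-- derivative of conjugation by `exp (t • A)` -/
lemma aux_hasDerivAt (A D : 𝔸) (t : ℝ) :
    HasDerivAt (fun s : ℝ => exp (s • A) * D * exp (-(s • A)))
      (exp (t • A) * (A * D - D * A) * exp (-(t • A))) t := by
  have h1 : HasDerivAt (fun s : ℝ => exp (s • A) * D) (exp (t • A) * A * D) t :=
    (hasDerivAt_exp_smul_const A t).mul_const D
  have h2 : HasDerivAt (fun s : ℝ => exp (s • (-A))) ((-A) * exp (t • (-A))) t :=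
    hasDerivAt_exp_smul_const' (-A) t
  have h3 := h1.mul h2
  simp only [smul_neg] at h3 ⊢
  convert h3 using 1
  · rfl
  noncomm_ring

lemma aux_pow_apply (A C : 𝔸) (k : ℕ) :
    ((ContinuousLinearMap.mul ℝ 𝔸 A - (ContinuousLinearMap.mul ℝ 𝔸).flip A) ^ k) C
      = (fun D => A * D - D * A)^[k] C := by
  induction k generalizing C with
  | zero => simp
  | succ k ih =>
    rw [pow_succ, Function.iterate_succ_apply]
    simp only [ContinuousLinearMap.mul_apply, ContinuousLinearMap.sub_apply,
      ContinuousLinearMap.mul_apply', ContinuousLinearMap.flip_apply]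
    exact ih _

lemma aux_exp_mulLeft (A D : 𝔸) :
    exp (ContinuousLinearMap.mul ℝ 𝔸 A) D = exp A * D := by
  have hpow : ∀ k : ℕ, ((ContinuousLinearMap.mul ℝ 𝔸 A) ^ k) D = A ^ k * D := by
    intro k
    induction k generalizing D with
    | zero => simp
    | succ k ih =>
      simp only [pow_succ, ContinuousLinearMap.mul_apply, ContinuousLinearMap.mul_apply', ih,
        mul_assoc]
  have h1 := (exp_series_hasSum_exp' (𝕂 := ℝ) (ContinuousLinearMap.mul ℝ 𝔸 A)).mapL
    (ContinuousLinearMap.apply ℝ 𝔸 D)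
  simp only [ContinuousLinearMap.apply_apply, map_smul] at h1
  have h2 := (exp_series_hasSum_exp' (𝕂 := ℝ) A).mapL ((ContinuousLinearMap.mul ℝ 𝔸).flip D)
  simp only [ContinuousLinearMap.flip_apply, ContinuousLinearMap.mul_apply', map_smul] at h2
  simp only [hpow] at h1
  exact h1.unique h2

lemma aux_exp_mulRight (A D : 𝔸) :
    exp ((ContinuousLinearMap.mul ℝ 𝔸).flip A) D = D * exp A := by
  have hpow : ∀ k : ℕ, (((ContinuousLinearMap.mul ℝ 𝔸).flip A) ^ k) D = D * A ^ k := by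
    intro k
    induction k generalizing D with
    | zero => simp
    | succ k ih =>
      simp only [pow_succ, ContinuousLinearMap.mul_apply, ContinuousLinearMap.mul_apply',
        ContinuousLinearMap.flip_apply, ih, mul_assoc]
      rw [((Commute.refl A).pow_right k).eq]
  have h1 := (exp_series_hasSum_exp' (𝕂 := ℝ) ((ContinuousLinearMap.mul ℝ 𝔸).flip A)).mapL
    (ContinuousLinearMap.apply ℝ 𝔸 D)
  simp only [ContinuousLinearMap.apply_apply, map_smul, hpow] at h1
  have h2 := (exp_series_hasSum_exp' (𝕂 := ℝ) A).mapL (ContinuousLinearMap.mul ℝ 𝔸 D)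
  simp only [ContinuousLinearMap.mul_apply', map_smul] at h2
  exact h1.unique h2

lemma aux_hasSum (A C : 𝔸) :
    HasSum (fun k : ℕ => (k ! : ℝ)⁻¹ • ((fun D => A * D - D * A)^[k] C))
      (exp A * C * exp (-A)) := by
  have hL : ∀ D : 𝔸, ContinuousLinearMap.mul ℝ 𝔸 A D = A * D := fun _ => rfl
  set L := ContinuousLinearMap.mul ℝ 𝔸 A
  set R := (ContinuousLinearMap.mul ℝ 𝔸).flip A
  have hcomm : Commute L (-R) := by
    apply Commute.neg_right
    ext b
    simp [L, R, mul_assoc]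
  have hRneg : -R = (ContinuousLinearMap.mul ℝ 𝔸).flip (-A) := by
    ext b; simp [R]
  have hexp : exp (L - R) C = exp A * C * exp (-A) := by
    rw [sub_eq_add_neg, exp_add_of_commute_of_mem_ball (𝕂 := ℝ) hcomm
      ((expSeries_radius_eq_top ℝ (𝔸 →L[ℝ] 𝔸)).symm ▸ edist_lt_top _ _)
      ((expSeries_radius_eq_top ℝ (𝔸 →L[ℝ] 𝔸)).symm ▸ edist_lt_top _ _), ContinuousLinearMap.mul_apply,
      hRneg, aux_exp_mulRight, aux_exp_mulLeft, mul_assoc]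
  have h1 := (exp_series_hasSum_exp' (𝕂 := ℝ) (L - R)).mapL (ContinuousLinearMap.apply ℝ 𝔸 C)
  simp only [ContinuousLinearMap.apply_apply, map_smul, hexp, L, R, aux_pow_apply] at h1
  exact h1

end Aux

section Bridge

variable {n : ℕ}

local notation "E" => (Fin n → ℝ)

lemma aux_coe_mul (f g : Module.End ℝ E) :
    LinearMap.toContinuousLinearMap (f * g)
      = LinearMap.toContinuousLinearMap f * LinearMap.toContinuousLinearMap g := by
  ext x
  simp [Module.End.mul_apply, ContinuousLinearMap.mul_apply]

lemma aux_iter_coe (X D : Module.End ℝ E) (k : ℕ) :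
    LinearMap.toContinuousLinearMap ((fun C => X * C - C * X)^[k] D)
      = (fun C => LinearMap.toContinuousLinearMap X * C
          - C * LinearMap.toContinuousLinearMap X)^[k] (LinearMap.toContinuousLinearMap D) := by
  induction k generalizing D with
  | zero => simp
  | succ k ih =>
    rw [Function.iterate_succ_apply, Function.iterate_succ_apply]
    rw [ih (X * D - D * X), map_sub, aux_coe_mul, aux_coe_mul]

end Bridge


open NormedSpace in
/-- Let `Γ : ℝⁿ × ℝⁿ → ℝⁿ` be a symmetric bilinear map, identified with the linear map
`v ↦ Γ(v,·)` into the endomorphisms of `ℝⁿ`, with range `S`, and let `g₀` be a nondegenerate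
symmetric bilinear form on `ℝⁿ`. Then `exp(Γ(v)) ∘ [Γ(w₁), Γ(w₂)] ∘ exp(-Γ(v))` is
`g₀`-anti-symmetric for all `v, w₁, w₂ ∈ ℝⁿ` iff `(ad_X)^k([Y,Z])` is `g₀`-anti-symmetric
for all `X, Y, Z ∈ S` and all `k ≥ 0`. -/
theorem stmt_4 {n : ℕ} (Γ : (Fin n → ℝ) →ₗ[ℝ] Module.End ℝ (Fin n → ℝ))
    (hΓ : ∀ v w : Fin n → ℝ, Γ v w = Γ w v)
    (g₀ : (Fin n → ℝ) →ₗ[ℝ] (Fin n → ℝ) →ₗ[ℝ] ℝ)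
    (hnd : ∀ v : Fin n → ℝ, (∀ w : Fin n → ℝ, g₀ v w = 0) → v = 0)
    (hsym : ∀ v w : Fin n → ℝ, g₀ v w = g₀ w v) :
    (∀ v w₁ w₂ x y : Fin n → ℝ,
        g₀ ((exp (LinearMap.toContinuousLinearMap (Γ v)) *
              LinearMap.toContinuousLinearMap (Γ w₁ * Γ w₂ - Γ w₂ * Γ w₁) *
              exp (-(LinearMap.toContinuousLinearMap (Γ v)))) x) y
          + g₀ x ((exp (LinearMap.toContinuousLinearMap (Γ v)) *
              LinearMap.toContinuousLinearMap (Γ w₁ * Γ w₂ - Γ w₂ * Γ w₁) *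
              exp (-(LinearMap.toContinuousLinearMap (Γ v)))) y) = 0) ↔
    (∀ X Y Z : Module.End ℝ (Fin n → ℝ), X ∈ LinearMap.range Γ → Y ∈ LinearMap.range Γ →
      Z ∈ LinearMap.range Γ → ∀ k : ℕ, ∀ x y : Fin n → ℝ,
        g₀ (((fun C => X * C - C * X)^[k] (Y * Z - Z * Y)) x) y
          + g₀ x (((fun C => X * C - C * X)^[k] (Y * Z - Z * Y)) y) = 0) := by
  constructor
  · intro h X Y Z hX hY hZ k x y
    obtain ⟨v, rfl⟩ := hX
    obtain ⟨w₁, rfl⟩ := hY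
    obtain ⟨w₂, rfl⟩ := hZ
    set A : (Fin n → ℝ) →L[ℝ] (Fin n → ℝ) := LinearMap.toContinuousLinearMap (Γ v) with hA
    set C : (Fin n → ℝ) →L[ℝ] (Fin n → ℝ) :=
      LinearMap.toContinuousLinearMap (Γ w₁ * Γ w₂ - Γ w₂ * Γ w₁) with hC
    set l : ((Fin n → ℝ) →L[ℝ] (Fin n → ℝ)) →L[ℝ] ℝ :=
      (LinearMap.toContinuousLinearMap (g₀.flip y)).comp
          (ContinuousLinearMap.apply ℝ (Fin n → ℝ) x)
        + (LinearMap.toContinuousLinearMap (g₀ x)).comp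
          (ContinuousLinearMap.apply ℝ (Fin n → ℝ) y) with hl
    have hlW : ∀ W : (Fin n → ℝ) →L[ℝ] (Fin n → ℝ), l W = g₀ (W x) y + g₀ x (W y) := by
      intro W
      simp [hl]
    have key : ∀ m : ℕ, ∀ t : ℝ,
        l (exp (t • A) * ((fun D => A * D - D * A)^[m] C) * exp (-(t • A))) = 0 := by
      intro m
      induction m with
      | zero =>
        intro t
        have h0 := h (t • v) w₁ w₂ x y
        simp only [map_smul] at h0
        rw [← hA, ← hC] at h0
        simp only [Function.iterate_zero, id_eq]
        rw [hlW]
        exact h0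
      | succ m ih =>
        intro t
        have hdc : HasDerivAt
            (fun s : ℝ => l (exp (s • A) * ((fun D => A * D - D * A)^[m] C) * exp (-(s • A))))
            (l (exp (t • A) * (A * ((fun D => A * D - D * A)^[m] C)
              - ((fun D => A * D - D * A)^[m] C) * A) * exp (-(t • A)))) t :=
          l.hasFDerivAt.comp_hasDerivAt t (aux_hasDerivAt A _ t)
        have hzero : (fun s : ℝ =>
            l (exp (s • A) * ((fun D => A * D - D * A)^[m] C) * exp (-(s • A))))
            = fun _ => (0 : ℝ) := funext ih
        have h0 : HasDerivAt
            (fun s : ℝ => l (exp (s • A) * ((fun D => A * D - D * A)^[m] C) * exp (-(s • A))))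
            0 t := by
          rw [hzero]; exact hasDerivAt_const t 0
        have huniq := h0.unique hdc
        rw [Function.iterate_succ_apply']
        exact huniq.symm
    have hk := key k 0
    simp only [zero_smul, neg_zero, exp_zero, one_mul, mul_one] at hk
    rw [hlW] at hk
    have hco := aux_iter_coe (Γ v) (Γ w₁ * Γ w₂ - Γ w₂ * Γ w₁) k
    rw [← hA, ← hC] at hco
    have happ : ∀ z, ((fun C => Γ v * C - C * Γ v)^[k] (Γ w₁ * Γ w₂ - Γ w₂ * Γ w₁)) z
        = ((fun D => A * D - D * A)^[k] C) z := by
      intro z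
      rw [← hco]
      simp
    rw [happ x, happ y]
    exact hk
  · intro h v w₁ w₂ x y
    set A : (Fin n → ℝ) →L[ℝ] (Fin n → ℝ) := LinearMap.toContinuousLinearMap (Γ v) with hA
    set C : (Fin n → ℝ) →L[ℝ] (Fin n → ℝ) :=
      LinearMap.toContinuousLinearMap (Γ w₁ * Γ w₂ - Γ w₂ * Γ w₁) with hC
    set l : ((Fin n → ℝ) →L[ℝ] (Fin n → ℝ)) →L[ℝ] ℝ :=
      (LinearMap.toContinuousLinearMap (g₀.flip y)).comp
          (ContinuousLinearMap.apply ℝ (Fin n → ℝ) x)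
        + (LinearMap.toContinuousLinearMap (g₀ x)).comp
          (ContinuousLinearMap.apply ℝ (Fin n → ℝ) y) with hl
    have hlW : ∀ W : (Fin n → ℝ) →L[ℝ] (Fin n → ℝ), l W = g₀ (W x) y + g₀ x (W y) := by
      intro W
      simp [hl]
    have hk : ∀ k : ℕ, l ((fun D => A * D - D * A)^[k] C) = 0 := by
      intro k
      have h0 := h (Γ v) (Γ w₁) (Γ w₂) ⟨v, rfl⟩ ⟨w₁, rfl⟩ ⟨w₂, rfl⟩ k x y
      have hco := aux_iter_coe (Γ v) (Γ w₁ * Γ w₂ - Γ w₂ * Γ w₁) k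
      rw [← hA, ← hC] at hco
      rw [hlW, ← hco]
      simpa using h0
    have hs := (aux_hasSum A C).mapL l
    have hz : (fun k : ℕ => l ((k ! : ℝ)⁻¹ • ((fun D => A * D - D * A)^[k] C)))
        = fun _ => (0 : ℝ) := by
      funext k
      rw [map_smul, hk, smul_zero]
    rw [hz] at hs
    have hfin : l (exp A * C * exp (-A)) = 0 := hs.unique hasSum_zero
    rw [hlW] at hfin
    exact hfin
end

section
/- Let L be a Lie algebra over a field, S a linear subspace of L, and define subspaces S_k inductively by S₁ = S and S_{k+1} = span{[X, Y] : X ∈ S, Y ∈ S_k}. Let 𝔤 be the Lie subalgebra of L generated by S. Then 𝔤 = ∑_{k≥1} S_k (as subspaces), and the derived algebra 𝔤' = [𝔤, 𝔤] equals ∑_{k≥2} S_k. -/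
/-!
By the Jacobi identity `[[a, b], y] = [a, [b, y]] - [b, [a, y]]`, induction on `j` gives
`[S_j, S_k] ⊆ S_{j+k}`. Hence `∑_{k≥1} S_k` is closed under the bracket, so it is a Lie
subalgebra containing `S`; it is also contained in every Lie subalgebra containing `S`, so it is
`𝔤`. Brackets of elements of `𝔤` therefore lie in `∑_{k≥2} S_k`, and conversely each `S_{k+1}` is
spanned by brackets of elements of `S ⊆ 𝔤` with elements of `S_k ⊆ 𝔤`.
-/

/-- Given a linear subspace `S` of a Lie algebra, `lowerSeq S k` is the subspace `S_{k+1}` of the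
inductively defined sequence `S₁ = S`, `S_{k+1} = span {[X, Y] : X ∈ S, Y ∈ S_k}`. -/
def lowerSeq {K L : Type*} [Field K] [LieRing L] [LieAlgebra K L]
    (S : Submodule K L) : ℕ → Submodule K L
  | 0 => S
  | k + 1 => Submodule.span K {z | ∃ x ∈ S, ∃ y ∈ lowerSeq S k, z = ⁅x, y⁆}

section

variable {K L : Type*} [Field K] [LieRing L] [LieAlgebra K L] (S : Submodule K L)

lemma lowerSeq_succ (k : ℕ) :
    lowerSeq S (k + 1) = Submodule.span K {z | ∃ x ∈ S, ∃ y ∈ lowerSeq S k, z = ⁅x, y⁆} :=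
  rfl

variable {S}

lemma lie_mem_lowerSeq_succ {k : ℕ} {x y : L} (hx : x ∈ S) (hy : y ∈ lowerSeq S k) :
    ⁅x, y⁆ ∈ lowerSeq S (k + 1) :=
  Submodule.subset_span ⟨x, hx, y, hy, rfl⟩

lemma lie_mem_lowerSeq_add_succ {j k : ℕ} {x y : L} (hx : x ∈ lowerSeq S j)
    (hy : y ∈ lowerSeq S k) :
    ⁅x, y⁆ ∈ lowerSeq S (j + k + 1) := by
  induction j generalizing k x y with
  | zero => simpa using lie_mem_lowerSeq_succ (S := S) hx hy
  | succ j ih =>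
    rw [lowerSeq_succ] at hx
    induction hx using Submodule.span_induction with
    | mem z hz =>
      obtain ⟨a, ha, b, hb, rfl⟩ := hz
      have hab : ⁅a, ⁅b, y⁆⁆ ∈ lowerSeq S (j + k + 1 + 1) :=
        lie_mem_lowerSeq_succ ha (ih hb hy)
      have hba : ⁅b, ⁅a, y⁆⁆ ∈ lowerSeq S (j + (k + 1) + 1) :=
        ih hb (lie_mem_lowerSeq_succ ha hy)
      rw [show j + 1 + k + 1 = j + k + 1 + 1 by omega, lie_lie]
      rw [show j + (k + 1) + 1 = j + k + 1 + 1 by omega] at hba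
      exact sub_mem hab hba
    | zero => simp
    | add u v _ _ hu hv => simpa only [add_lie] using add_mem hu hv
    | smul c u _ hu => simpa only [smul_lie] using Submodule.smul_mem _ c hu

lemma lowerSeq_le_lieSpan (k : ℕ) : lowerSeq S k ≤ (LieSubalgebra.lieSpan K L S).toSubmodule := by
  induction k with
  | zero => exact LieSubalgebra.subset_lieSpan
  | succ k ih =>
    rw [lowerSeq_succ, Submodule.span_le]
    rintro _ ⟨x, hx, y, hy, rfl⟩
    exact LieSubalgebra.lie_mem _ (LieSubalgebra.subset_lieSpan hx) (ih hy)

lemma lie_mem_iSup_lowerSeq_succ {x y : L} (hx : x ∈ ⨆ k, lowerSeq S k)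
    (hy : y ∈ ⨆ k, lowerSeq S k) :
    ⁅x, y⁆ ∈ ⨆ k, lowerSeq S (k + 1) := by
  induction hx using Submodule.iSup_induction' with
  | mem j x hx =>
    induction hy using Submodule.iSup_induction' with
    | mem k y hy => exact Submodule.mem_iSup_of_mem (j + k) (lie_mem_lowerSeq_add_succ hx hy)
    | zero => simp
    | add u v _ _ hu hv => simpa only [lie_add] using add_mem hu hv
  | zero => simp
  | add u v _ _ hu hv => simpa only [add_lie] using add_mem hu hv

lemma iSup_lowerSeq_succ_le : ⨆ k, lowerSeq S (k + 1) ≤ ⨆ k, lowerSeq S k :=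
  iSup_le fun k => le_iSup (lowerSeq S) (k + 1)

variable (S) in
def iSupLowerSeqLieSubalgebra : LieSubalgebra K L :=
  { (⨆ k, lowerSeq S k) with
    lie_mem' := fun hx hy => iSup_lowerSeq_succ_le (lie_mem_iSup_lowerSeq_succ hx hy) }

variable (S) in
lemma iSup_lowerSeq_eq_lieSpan :
    ⨆ k, lowerSeq S k = (LieSubalgebra.lieSpan K L S).toSubmodule :=
  le_antisymm (iSup_le lowerSeq_le_lieSpan)
    (LieSubalgebra.lieSpan_le (K := iSupLowerSeqLieSubalgebra S).2 (le_iSup (lowerSeq S) 0))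

end

/-- Let `S` be a linear subspace of a Lie algebra `L` over a field, with `S_k` defined by
`S₁ = S`, `S_{k+1} = span {[X, Y] : X ∈ S, Y ∈ S_k}`, and let `𝔤` be the Lie subalgebra
generated by `S`. Then `𝔤 = ∑_{k ≥ 1} S_k` as subspaces, and the derived algebra
`𝔤' = [𝔤, 𝔤]` (the span of all brackets of elements of `𝔤`) equals `∑_{k ≥ 2} S_k`.
(Here `lowerSeq S k = S_{k+1}`.) -/
theorem stmt_6 {K L : Type*} [Field K] [LieRing L] [LieAlgebra K L]
    (S : Submodule K L)
    (𝔤 : LieSubalgebra K L) (h𝔤 : 𝔤 = LieSubalgebra.lieSpan K L S) :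
    (⨆ k : ℕ, lowerSeq S k) = 𝔤.toSubmodule ∧
    (⨆ k : ℕ, lowerSeq S (k + 1)) =
      Submodule.span K {z | ∃ x ∈ 𝔤, ∃ y ∈ 𝔤, z = ⁅x, y⁆} := by
  subst h𝔤
  have h𝔤 := iSup_lowerSeq_eq_lieSpan S
  refine ⟨h𝔤, le_antisymm (iSup_le fun k => ?_) ?_⟩
  · rw [lowerSeq_succ, Submodule.span_le]
    rintro _ ⟨x, hx, y, hy, rfl⟩
    exact Submodule.subset_span
      ⟨x, LieSubalgebra.subset_lieSpan hx, y, lowerSeq_le_lieSpan k hy, rfl⟩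
  · rw [Submodule.span_le]
    rintro _ ⟨x, hx, y, hy, rfl⟩
    exact lie_mem_iSup_lowerSeq_succ (h𝔤 ▸ hx) (h𝔤 ▸ hy)
end

section
/- Let A : ℝ² → ℝ² be a nonzero linear map. There exists a nondegenerate symmetric bilinear form g₀ on ℝ² such that A is g₀-anti-symmetric if and only if tr A = 0 and det A ≠ 0. -/
/-- Let `A : ℝ² → ℝ²` be a nonzero linear map. There exists a nondegenerate symmetric bilinear
form `g₀` on `ℝ²` with `A` `g₀`-anti-symmetric if and only if `tr A = 0` and `det A ≠ 0`. -/
theorem stmt_8 (A : Module.End ℝ (Fin 2 → ℝ)) (hA : A ≠ 0) :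
    (∃ g₀ : (Fin 2 → ℝ) →ₗ[ℝ] (Fin 2 → ℝ) →ₗ[ℝ] ℝ,
      (∀ v : Fin 2 → ℝ, (∀ w : Fin 2 → ℝ, g₀ v w = 0) → v = 0) ∧
      (∀ v w : Fin 2 → ℝ, g₀ v w = g₀ w v) ∧
      (∀ v w : Fin 2 → ℝ, g₀ (A v) w + g₀ v (A w) = 0)) ↔
    (LinearMap.trace ℝ (Fin 2 → ℝ) A = 0 ∧ LinearMap.det A ≠ 0) := by
  set M := LinearMap.toMatrix' A with hM
  set a := M 0 0 with ha
  set b := M 0 1 with hb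
  set c := M 1 0 with hc
  set d := M 1 1 with hd
  have hdecomp : ∀ v : Fin 2 → ℝ,
      v = v 0 • (Pi.single 0 1 : Fin 2 → ℝ) + v 1 • (Pi.single 1 1 : Fin 2 → ℝ) := by
    intro v; funext i; fin_cases i <;> simp
  have hcol : ∀ (j i : Fin 2), A (Pi.single j 1) i = M i j := by
    intro j i
    have hsingle : (Pi.single j 1 : Fin 2 → ℝ) = fun j' => if j' = j then 1 else 0 := by
      funext k; simp [Pi.single_apply]
    rw [hM, LinearMap.toMatrix'_apply]
  have hApp : ∀ (v : Fin 2 → ℝ) (i : Fin 2), A v i = M i 0 * v 0 + M i 1 * v 1 := by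
    intro v i
    conv_lhs => rw [hdecomp v]
    simp [map_add, map_smul, hcol]
    ring
  have htr : LinearMap.trace ℝ (Fin 2 → ℝ) A = a + d := by
    rw [LinearMap.trace_eq_matrix_trace ℝ (Pi.basisFun ℝ (Fin 2)),
      LinearMap.toMatrix_eq_toMatrix', Matrix.trace_fin_two, ← hM]
  have hdet : LinearMap.det A = a * d - b * c := by
    rw [← LinearMap.det_toMatrix' A, Matrix.det_fin_two, ← hM, ← ha, ← hb, ← hc, ← hd]
  have hMne : ¬(a = 0 ∧ b = 0 ∧ c = 0 ∧ d = 0) := by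
    rintro ⟨h1, h2, h3, h4⟩
    apply hA
    apply LinearMap.toMatrix'.injective
    rw [← hM, map_zero]
    ext i j
    fin_cases i <;> fin_cases j <;> simpa
  constructor
  · rintro ⟨g, hnd, hsym, hanti⟩
    set e0 : Fin 2 → ℝ := Pi.single 0 1 with he0
    set e1 : Fin 2 → ℝ := Pi.single 1 1 with he1
    set p := g e0 e0 with hp
    set q := g e0 e1 with hq
    set r := g e1 e1 with hr
    have hq' : g e1 e0 = q := hsym e1 e0
    have gexp : ∀ v w : Fin 2 → ℝ,
        g v w = v 0 * w 0 * p + v 0 * w 1 * q + v 1 * w 0 * q + v 1 * w 1 * r := by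
      intro v w
      conv_lhs => rw [hdecomp v, hdecomp w]
      simp [map_add, map_smul, LinearMap.add_apply, LinearMap.smul_apply, smul_eq_mul,
        ← he0, ← he1, hq']
      ring
    have he00 : e0 0 = 1 := by simp [he0]
    have he01 : e0 1 = 0 := by simp [he0]
    have he10 : e1 0 = 0 := by simp [he1]
    have he11 : e1 1 = 1 := by simp [he1]
    -- nondegeneracy gives p*r - q*q ≠ 0
    have hΔ : p * r - q * q ≠ 0 := by
      intro hzero
      by_cases h0 : q = 0 ∧ r = 0
      · have := hnd ![0, 1] (by
          intro w
          rw [gexp]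
          simp [h0.1, h0.2])
        simpa using congrFun this 1
      · have := hnd ![r, -q] (by
          intro w
          rw [gexp]
          simp only [Matrix.cons_val_zero, Matrix.cons_val_one, Matrix.head_cons]
          linear_combination w 0 * hzero)
        have h1 : r = 0 := by simpa using congrFun this 0
        have h2 : q = 0 := by
          have := congrFun this 1
          simp at this
          linarith
        exact h0 ⟨h2, h1⟩
    -- the three equations
    have E1 : a * p + c * q = 0 := by
      have h := hanti e0 e0
      simp only [gexp, hApp, he00, he01, he10, he11, ← ha, ← hb, ← hc, ← hd] at h
      linear_combination h / 2
    have E2 : b * q + d * r = 0 := by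
      have h := hanti e1 e1
      simp only [gexp, hApp, he00, he01, he10, he11, ← ha, ← hb, ← hc, ← hd] at h
      linear_combination h / 2
    have E3 : a * q + c * r + b * p + d * q = 0 := by
      have h := hanti e0 e1
      simp only [gexp, hApp, he00, he01, he10, he11, ← ha, ← hb, ← hc, ← hd] at h
      linear_combination h
    have htr0 : a + d = 0 := by
      have key : (a + d) * (p * r - q * q) = 0 := by linear_combination r * E1 + p * E2 - q * E3
      rcases mul_eq_zero.mp key with h | h
      · exact h
      · exact absurd h hΔ
    refine ⟨by rw [htr, htr0], ?_⟩
    rw [hdet]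
    intro hdet0
    have hs2 : (p * b + q * d) ^ 2 = 0 := by
      linear_combination (p * b + q * d) * E3 - (q * b + r * d) * E1 + (p * r - q * q) * hdet0
    have hs : p * b + q * d = 0 := by
      have := sq_eq_zero_iff.mp hs2
      exact this
    have hs' : q * a + r * c = 0 := by linear_combination E3 - hs
    have ha0 : a = 0 := by
      have : a * (p * r - q * q) = 0 := by linear_combination r * E1 - q * hs'
      rcases mul_eq_zero.mp this with h | h
      · exact h
      · exact absurd h hΔ
    have hc0 : c = 0 := by
      have : c * (p * r - q * q) = 0 := by linear_combination p * hs' - q * E1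
      rcases mul_eq_zero.mp this with h | h
      · exact h
      · exact absurd h hΔ
    have hb0 : b = 0 := by
      have : b * (p * r - q * q) = 0 := by linear_combination r * hs - q * E2
      rcases mul_eq_zero.mp this with h | h
      · exact h
      · exact absurd h hΔ
    have hd0 : d = 0 := by
      have : d * (p * r - q * q) = 0 := by linear_combination p * E2 - q * hs
      rcases mul_eq_zero.mp this with h | h
      · exact h
      · exact absurd h hΔ
    exact hMne ⟨ha0, hb0, hc0, hd0⟩
  · rintro ⟨htr0, hdet0⟩
    have hda : d = -a := by
      rw [htr] at htr0; linarith
    have hne : a * a + b * c ≠ 0 := by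
      rw [hdet, hda] at hdet0
      intro h
      apply hdet0
      linarith
    refine ⟨LinearMap.mk₂ ℝ
      (fun v w => -c * (v 0 * w 0) + a * (v 0 * w 1) + a * (v 1 * w 0) + b * (v 1 * w 1))
      (by intros; simp [Pi.add_apply]; ring)
      (by intros; simp [Pi.smul_apply, smul_eq_mul]; ring)
      (by intros; simp [Pi.add_apply]; ring)
      (by intros; simp [Pi.smul_apply, smul_eq_mul]; ring), ?_, ?_, ?_⟩
    · intro v hv
      have h0 := hv (Pi.single 0 1)
      have h1 := hv (Pi.single 1 1)
      simp [LinearMap.mk₂_apply] at h0 h1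
      have hv0 : v 0 = 0 := by
        have : v 0 * (a * a + b * c) = 0 := by linear_combination (-b) * h0 + a * h1
        rcases mul_eq_zero.mp this with h | h
        · exact h
        · exact absurd h hne
      have hv1 : v 1 = 0 := by
        have : v 1 * (a * a + b * c) = 0 := by linear_combination a * h0 + c * h1
        rcases mul_eq_zero.mp this with h | h
        · exact h
        · exact absurd h hne
      funext i; fin_cases i <;> simpa
    · intro v w
      simp [LinearMap.mk₂_apply]
      ring
    · intro v w
      simp only [LinearMap.mk₂_apply, hApp, ← ha, ← hb, ← hc, ← hd, hda]
      ring
end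

section
/- Let A : ℝ² → ℝ² be a nonzero linear map. There exists a positive definite symmetric bilinear form g₀ on ℝ² such that A is g₀-anti-symmetric if and only if tr A = 0 and det A > 0. -/
/-! By Cayley–Hamilton, `A² = (tr A) A - (det A) 1` on a plane. If `A` is skew for a positive
definite `g` and `A v ≠ 0`, pairing this identity with `A v` and with `v` gives
`tr A · g(Av, Av) = 0` and `det A · g(v, v) = g(Av, Av)`. Conversely, if `tr A = 0` and
`det A = c > 0` then `A² = -c`, and averaging any inner product `h` over the cyclic group
generated by `A / √c` gives the `A`-invariant form `c h(x, y) + h(Ax, Ay)`. -/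

open Module Polynomial

theorem LinearMap.charpoly_of_finrank_eq_two {R M : Type*} [CommRing R] [Nontrivial R]
    [AddCommGroup M] [Module R M] [Module.Free R M] [Module.Finite R M]
    (f : Module.End R M) (h : finrank R M = 2) :
    f.charpoly = X ^ 2 - C (LinearMap.trace R M f) * X + C (LinearMap.det f) := by
  let b := Module.Free.chooseBasis R M
  rw [← f.charpoly_toMatrix b, LinearMap.trace_eq_matrix_trace R b, ← LinearMap.det_toMatrix b]
  exact Matrix.charpoly_of_card_eq_two _ (by rw [← Module.finrank_eq_card_chooseBasisIndex, h])

theorem LinearMap.apply_apply_of_finrank_eq_two {R M : Type*} [CommRing R] [Nontrivial R]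
    [AddCommGroup M] [Module R M] [Module.Free R M] [Module.Finite R M]
    (f : Module.End R M) (h : finrank R M = 2) (v : M) :
    f (f v) = LinearMap.trace R M f • f v - LinearMap.det f • v := by
  have := congr($(f.aeval_self_charpoly) v)
  rw [f.charpoly_of_finrank_eq_two h] at this
  simp only [pow_two, map_add, aeval_sub, map_mul, aeval_X, aeval_C, LinearMap.add_apply,
    LinearMap.sub_apply, End.mul_apply, algebraMap_end_apply, LinearMap.zero_apply] at this
  rw [← sub_eq_zero, ← this]
  abel

section
variable {K V : Type*} [Field K] [LinearOrder K] [IsStrictOrderedRing K]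
  [AddCommGroup V] [Module K V]

theorem trace_eq_zero_and_det_pos_of_skew (hV : finrank K V = 2)
    (g : LinearMap.BilinForm K V) (A : Module.End K V) (hA : A ≠ 0)
    (hpos : ∀ v, v ≠ 0 → 0 < g v v) (hskew : ∀ v w, g (A v) w + g v (A w) = 0) :
    LinearMap.trace K V A = 0 ∧ 0 < LinearMap.det A := by
  have : FiniteDimensional K V := Module.finite_of_finrank_pos (by omega)
  obtain ⟨v, hv⟩ : ∃ v, A v ≠ 0 := by
    by_contra! h
    exact hA (LinearMap.ext h)
  have hv₀ : v ≠ 0 := by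
    rintro rfl
    exact hv (map_zero A)
  have hCH := A.apply_apply_of_finrank_eq_two hV v
  set t := LinearMap.trace K V A
  set d := LinearMap.det A
  have hvv := hskew v v
  have hAvAv := hskew (A v) (A v)
  have hAvv := hskew (A v) v
  have hvAv := hskew v (A v)
  rw [hCH] at hAvAv hAvv hvAv
  simp only [map_sub, map_smul, LinearMap.sub_apply, LinearMap.smul_apply, smul_eq_mul]
    at hAvAv hAvv hvAv
  have htrace : t * g (A v) (A v) = 0 := by linear_combination (hAvAv + d * hvv) / 2
  have hdet : d * g v v = g (A v) (A v) := by linear_combination -(hAvv + hvAv - t * hvv) / 2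
  refine ⟨(mul_eq_zero.1 htrace).resolve_right (hpos _ hv).ne', ?_⟩
  exact pos_of_mul_pos_left (hdet ▸ hpos _ hv) (hpos v hv₀).le

theorem exists_posDef_symm_skew_of_apply_apply_eq_neg_smul (h : LinearMap.BilinForm K V)
    (hpos : ∀ v, v ≠ 0 → 0 < h v v) (hsymm : ∀ v w, h v w = h w v)
    (A : Module.End K V) {c : K} (hc : 0 < c) (hA : ∀ v, A (A v) = -(c • v)) :
    ∃ g : LinearMap.BilinForm K V, (∀ v, v ≠ 0 → 0 < g v v) ∧ (∀ v w, g v w = g w v) ∧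
      ∀ v w, g (A v) w + g v (A w) = 0 := by
  refine ⟨c • h + h.compl₁₂ A A, fun v hv => ?_, fun v w => ?_, fun v w => ?_⟩ <;>
    simp only [LinearMap.add_apply, LinearMap.smul_apply, LinearMap.compl₁₂_apply, smul_eq_mul]
  · have hAv : 0 ≤ h (A v) (A v) := by
      rcases eq_or_ne (A v) 0 with hAv | hAv
      · simp [hAv]
      · exact (hpos _ hAv).le
    exact add_pos_of_pos_of_nonneg (mul_pos hc (hpos v hv)) hAv
  · rw [hsymm v w, hsymm (A v) (A w)]
  · simp only [hA, map_neg, map_smul, LinearMap.neg_apply, LinearMap.smul_apply, smul_eq_mul]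
    ring

end

/-- Let `A : ℝ² → ℝ²` be a nonzero linear map. There exists a positive definite symmetric
bilinear form `g₀` on `ℝ²` with `A` `g₀`-anti-symmetric if and only if `tr A = 0` and
`det A > 0`. -/
theorem stmt_9 (A : Module.End ℝ (Fin 2 → ℝ)) (hA : A ≠ 0) :
    (∃ g₀ : (Fin 2 → ℝ) →ₗ[ℝ] (Fin 2 → ℝ) →ₗ[ℝ] ℝ,
      (∀ v : Fin 2 → ℝ, v ≠ 0 → 0 < g₀ v v) ∧
      (∀ v w : Fin 2 → ℝ, g₀ v w = g₀ w v) ∧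
      (∀ v w : Fin 2 → ℝ, g₀ (A v) w + g₀ v (A w) = 0)) ↔
    (LinearMap.trace ℝ (Fin 2 → ℝ) A = 0 ∧ 0 < LinearMap.det A) := by
  have hV : finrank ℝ (Fin 2 → ℝ) = 2 := Module.finrank_fin_fun ℝ
  refine ⟨fun ⟨g₀, hpos, _, hskew⟩ => trace_eq_zero_and_det_pos_of_skew hV g₀ A hA hpos hskew,
    fun ⟨htr, hdet⟩ => ?_⟩
  refine exists_posDef_symm_skew_of_apply_apply_eq_neg_smul (dotProductBilin ℝ ℝ)
    (fun v hv => by simpa using Matrix.dotProduct_star_self_pos_iff.2 hv) dotProduct_comm A hdet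
    fun v => ?_
  rw [A.apply_apply_of_finrank_eq_two hV, htr, zero_smul, zero_sub]
end

section
/- Let 𝔤 be a Lie subalgebra of the Lie algebra of linear endomorphisms of ℝ² (under the commutator bracket), with derived algebra 𝔤' = [𝔤, 𝔤]. There exists a nondegenerate symmetric bilinear form g₀ on ℝ² with 𝔤' ⊆ 𝔰𝔬(g₀) if and only if either 𝔤' = 0, or 𝔤' is one-dimensional and is spanned by an invertible endomorphism. -/
attribute [local instance 100] LieRing.ofAssociativeRing

namespace Stmt11Aux

abbrev V : Type := Fin 2 → ℝ

def e0 : V := ![1, 0]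
def e1 : V := ![0, 1]

@[simp] lemma e0_0 : e0 0 = 1 := rfl
@[simp] lemma e0_1 : e0 1 = 0 := rfl
@[simp] lemma e1_0 : e1 0 = 0 := rfl
@[simp] lemma e1_1 : e1 1 = 1 := rfl

lemma expand (v : V) : v = v 0 • e0 + v 1 • e1 := by
  funext i
  fin_cases i <;> simp [e0, e1]

lemma comp (A : Module.End ℝ V) (v : V) (i : Fin 2) :
    A v i = v 0 * A e0 i + v 1 * A e1 i := by
  conv_lhs => rw [expand v]
  simp [map_add, map_smul]

lemma eval (g : V →ₗ[ℝ] V →ₗ[ℝ] ℝ) (v w : V) :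
    g v w = v 0 * w 0 * g e0 e0 + v 0 * w 1 * g e0 e1
      + v 1 * w 0 * g e1 e0 + v 1 * w 1 * g e1 e1 := by
  conv_lhs => rw [expand v, expand w]
  simp only [map_add, map_smul, LinearMap.add_apply, LinearMap.smul_apply, smul_eq_mul]
  ring

/-- the endomorphism with matrix `[[p, q], [r, s]]` -/
def mk2 (p q r s : ℝ) : Module.End ℝ V where
  toFun v := ![p * v 0 + q * v 1, r * v 0 + s * v 1]
  map_add' u v := by funext i; fin_cases i <;> simp <;> ring
  map_smul' c v := by funext i; fin_cases i <;> simp <;> ring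

@[simp] lemma mk2_apply_0 (p q r s : ℝ) (v : V) : mk2 p q r s v 0 = p * v 0 + q * v 1 := rfl
@[simp] lemma mk2_apply_1 (p q r s : ℝ) (v : V) : mk2 p q r s v 1 = r * v 0 + s * v 1 := rfl

lemma mk2_mul (p q r s p' q' r' s' : ℝ) :
    mk2 p q r s * mk2 p' q' r' s' =
      mk2 (p * p' + q * r') (p * q' + q * s') (r * p' + s * r') (r * q' + s * s') := by
  apply LinearMap.ext
  intro v
  funext i
  fin_cases i <;> simp [Module.End.mul_apply] <;> ring

lemma mk2_one : mk2 1 0 0 1 = 1 := by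
  apply LinearMap.ext
  intro v
  funext i
  fin_cases i <;> simp

lemma mk2_smul (t p q r s : ℝ) :
    t • mk2 p q r s = mk2 (t * p) (t * q) (t * r) (t * s) := by
  apply LinearMap.ext
  intro v
  funext i
  fin_cases i <;> simp <;> ring

lemma isUnit_mk2 {p q r s : ℝ} (h : p * s - q * r ≠ 0) : IsUnit (mk2 p q r s) := by
  have hD := h
  set D := p * s - q * r with hDdef
  refine ⟨⟨mk2 p q r s, mk2 (s / D) (-(q / D)) (-(r / D)) (p / D), ?_, ?_⟩, rfl⟩
  · rw [mk2_mul, ← mk2_one]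
    rw [show p * (s / D) + q * -(r / D) = 1 by field_simp; linarith [hDdef],
        show p * -(q / D) + q * (p / D) = 0 by rw [hDdef]; field_simp; ring,
        show r * (s / D) + s * -(r / D) = 0 by rw [hDdef]; field_simp; ring,
        show r * -(q / D) + s * (p / D) = 1 by field_simp; linarith [hDdef]]
  · rw [mk2_mul, ← mk2_one]
    rw [show s / D * p + -(q / D) * r = 1 by field_simp; linarith [hDdef],
        show s / D * q + -(q / D) * s = 0 by rw [hDdef]; field_simp; ring,
        show -(r / D) * p + p / D * r = 0 by rw [hDdef]; field_simp; ring,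
        show -(r / D) * q + p / D * s = 1 by field_simp; linarith [hDdef]]

/-- the bilinear form with matrix `[[p, q], [r, s]]` -/
def mkForm (p q r s : ℝ) : V →ₗ[ℝ] V →ₗ[ℝ] ℝ :=
  LinearMap.mk₂ ℝ
    (fun v w => p * (v 0 * w 0) + q * (v 0 * w 1) + r * (v 1 * w 0) + s * (v 1 * w 1))
    (by intros; simp; ring) (by intros; simp [smul_eq_mul]; ring)
    (by intros; simp; ring) (by intros; simp [smul_eq_mul]; ring)

lemma mkForm_apply (p q r s : ℝ) (v w : V) :
    mkForm p q r s v w =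
      p * (v 0 * w 0) + q * (v 0 * w 1) + r * (v 1 * w 0) + s * (v 1 * w 1) := rfl

lemma trace_zero (s : Set (Module.End ℝ V))
    (hs : ∀ z ∈ s, ∃ x y : Module.End ℝ V, z = ⁅x, y⁆)
    (X : Module.End ℝ V) (hX : X ∈ Submodule.span ℝ s) :
    X e0 0 + X e1 1 = 0 := by
  induction hX using Submodule.span_induction with
  | mem z hz =>
      obtain ⟨x, y, rfl⟩ := hs z hz
      rw [Ring.lie_def]
      simp only [LinearMap.sub_apply, Module.End.mul_apply, Pi.sub_apply]
      rw [comp x (y e0) 0, comp x (y e1) 1, comp y (x e0) 0, comp y (x e1) 1]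
      ring
  | zero => simp
  | add u v _ _ hu hv =>
      simp only [LinearMap.add_apply, Pi.add_apply]
      linarith
  | smul c u _ hu =>
      simp only [LinearMap.smul_apply, Pi.smul_apply, smul_eq_mul]
      linear_combination c * hu

lemma V_ext {v w : V} (h0 : v 0 = w 0) (h1 : v 1 = w 1) : v = w := by
  funext i
  fin_cases i
  · exact h0
  · exact h1

lemma solve2 {p q s a b c d : ℝ} (hdet : p * s - q * q ≠ 0) (htr : a + d = 0)
    (h1 : a * p + c * q = 0) (h2 : b * q - a * s = 0) (h3 : c * s + b * p = 0) :
    ∃ t : ℝ, a = t * q ∧ b = t * s ∧ c = t * -p ∧ d = t * -q := by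
  refine ⟨(b * p - a * q) / (p * s - q * q), ?_, ?_, ?_, ?_⟩
  · rw [div_mul_eq_mul_div, eq_div_iff hdet]
    linear_combination (-p) * h2
  · rw [div_mul_eq_mul_div, eq_div_iff hdet]
    linear_combination (-q) * h2
  · rw [div_mul_eq_mul_div, eq_div_iff hdet]
    linear_combination p * h3 - q * h1
  · rw [div_mul_eq_mul_div, eq_div_iff hdet]
    linear_combination (p * s - q * q) * htr + p * h2

end Stmt11Aux

open Stmt11Aux in
/-- Let `𝔤` be a Lie subalgebra of `𝔤𝔩(2,ℝ)` with derived algebra `𝔤' = [𝔤, 𝔤]` (the span of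
all brackets of elements of `𝔤`). There exists a nondegenerate symmetric bilinear form `g₀` on
`ℝ²` with `𝔤' ⊆ 𝔰𝔬(g₀)` if and only if either `𝔤' = 0`, or `𝔤'` is one-dimensional and
spanned by an invertible endomorphism. -/
theorem stmt_11 (𝔤 : LieSubalgebra ℝ (Module.End ℝ (Fin 2 → ℝ)))
    (𝔤' : Submodule ℝ (Module.End ℝ (Fin 2 → ℝ)))
    (h𝔤' : 𝔤' = Submodule.span ℝ {z | ∃ x ∈ 𝔤, ∃ y ∈ 𝔤, z = ⁅x, y⁆}) :
    (∃ g₀ : (Fin 2 → ℝ) →ₗ[ℝ] (Fin 2 → ℝ) →ₗ[ℝ] ℝ,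
      (∀ v : Fin 2 → ℝ, (∀ w : Fin 2 → ℝ, g₀ v w = 0) → v = 0) ∧
      (∀ v w : Fin 2 → ℝ, g₀ v w = g₀ w v) ∧
      (∀ A ∈ 𝔤', ∀ v w : Fin 2 → ℝ, g₀ (A v) w + g₀ v (A w) = 0)) ↔
    (𝔤' = ⊥ ∨ (Module.finrank ℝ 𝔤' = 1 ∧
      ∃ A : Module.End ℝ (Fin 2 → ℝ), IsUnit A ∧ 𝔤' = Submodule.span ℝ {A})) := by
  have htr0 : ∀ X ∈ 𝔤', X e0 0 + X e1 1 = 0 := by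
    intro X hX
    rw [h𝔤'] at hX
    refine trace_zero _ ?_ X hX
    rintro z ⟨x, -, y, -, rfl⟩
    exact ⟨x, y, rfl⟩
  constructor
  · rintro ⟨g₀, hnd, hsym, hanti⟩
    have hGsym : g₀ e1 e0 = g₀ e0 e1 := hsym e1 e0
    have hdet : g₀ e0 e0 * g₀ e1 e1 - g₀ e0 e1 * g₀ e0 e1 ≠ 0 := by
      intro hzero
      by_cases hpq : g₀ e0 e0 = 0 ∧ g₀ e0 e1 = 0
      · have h0 : e0 = 0 := by
          apply hnd
          intro w
          rw [eval g₀ e0 w, hGsym]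
          simp only [e0_0, e0_1, one_mul, mul_one, zero_mul, mul_zero, add_zero, zero_add]
          rw [hpq.1, hpq.2]
          ring
        simpa using congrFun h0 0
      · have h0 : g₀ e0 e1 • e0 - g₀ e0 e0 • e1 = 0 := by
          apply hnd
          intro w
          have hv0 : (g₀ e0 e1 • e0 - g₀ e0 e0 • e1) 0 = g₀ e0 e1 := by simp
          have hv1 : (g₀ e0 e1 • e0 - g₀ e0 e0 • e1) 1 = -(g₀ e0 e0) := by simp
          rw [eval g₀ _ w, hGsym, hv0, hv1]
          linear_combination (-(w 1)) * hzero
        have h00 := congrFun h0 0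
        have h01 := congrFun h0 1
        simp at h00 h01
        exact hpq ⟨by linarith, h00⟩
    have hspan : ∀ A ∈ 𝔤', ∃ t : ℝ,
        A = t • mk2 (g₀ e0 e1) (g₀ e1 e1) (-(g₀ e0 e0)) (-(g₀ e0 e1)) := by
      intro A hA
      have htr := htr0 A hA
      have hE00 := hanti A hA e0 e0
      have hE11 := hanti A hA e1 e1
      have hE01 := hanti A hA e0 e1
      rw [eval g₀ (A e0) e0, eval g₀ e0 (A e0), hGsym] at hE00
      rw [eval g₀ (A e1) e1, eval g₀ e1 (A e1), hGsym] at hE11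
      rw [eval g₀ (A e0) e1, eval g₀ e0 (A e1), hGsym] at hE01
      simp only [e0_0, e0_1, e1_0, e1_1, one_mul, mul_one, zero_mul, mul_zero,
        add_zero, zero_add] at hE00 hE11 hE01
      have h1 : A e0 0 * g₀ e0 e0 + A e0 1 * g₀ e0 e1 = 0 := by
        linear_combination hE00 / 2
      have h2 : A e1 0 * g₀ e0 e1 - A e0 0 * g₀ e1 e1 = 0 := by
        linear_combination hE11 / 2 - g₀ e1 e1 * htr
      have h3 : A e0 1 * g₀ e1 e1 + A e1 0 * g₀ e0 e0 = 0 := by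
        linear_combination hE01 - g₀ e0 e1 * htr
      obtain ⟨t, hta, htb, htc, htd⟩ := solve2 hdet htr h1 h2 h3
      refine ⟨t, ?_⟩
      apply LinearMap.ext
      intro v
      apply V_ext
      · rw [comp A v 0]
        simp only [LinearMap.smul_apply, Pi.smul_apply, mk2_apply_0, smul_eq_mul]
        linear_combination v 0 * hta + v 1 * htb
      · rw [comp A v 1]
        simp only [LinearMap.smul_apply, Pi.smul_apply, mk2_apply_1, smul_eq_mul]
        linear_combination v 0 * htc + v 1 * htd
    by_cases hbot : 𝔤' = ⊥
    · exact Or.inl hbot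
    · right
      obtain ⟨B, hB𝔤, hBne⟩ := Submodule.exists_mem_ne_zero_of_ne_bot hbot
      obtain ⟨t, hBt⟩ := hspan B hB𝔤
      have ht : t ≠ 0 := by
        rintro rfl
        rw [zero_smul] at hBt
        exact hBne hBt
      have hspanB : 𝔤' = Submodule.span ℝ {B} := by
        apply le_antisymm
        · intro X hX
          obtain ⟨sX, hXt⟩ := hspan X hX
          rw [Submodule.mem_span_singleton]
          refine ⟨sX * t⁻¹, ?_⟩
          rw [hBt, smul_smul, hXt]
          congr 1
          field_simp
        · rw [Submodule.span_le, Set.singleton_subset_iff]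
          exact hB𝔤
      refine ⟨?_, B, ?_, hspanB⟩
      · rw [hspanB]
        exact finrank_span_singleton hBne
      · rw [hBt, mk2_smul]
        apply isUnit_mk2
        have heq : t * g₀ e0 e1 * (t * -(g₀ e0 e1)) - t * g₀ e1 e1 * (t * -(g₀ e0 e0))
            = t ^ 2 * (g₀ e0 e0 * g₀ e1 e1 - g₀ e0 e1 * g₀ e0 e1) := by ring
        rw [heq]
        exact mul_ne_zero (pow_ne_zero 2 ht) hdet
  · rintro (hbot | ⟨-, A, hAu, hAspan⟩)
    · refine ⟨mkForm 1 0 0 1, ?_, ?_, ?_⟩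
      · intro v hv
        have h0 := hv e0
        have h1 := hv e1
        rw [mkForm_apply] at h0 h1
        simp at h0 h1
        apply V_ext
        · simpa using h0
        · simpa using h1
      · intro v w
        rw [mkForm_apply, mkForm_apply]
        ring
      · intro X hX v w
        rw [hbot, Submodule.mem_bot] at hX
        subst hX
        simp [mkForm_apply]
    · have hA𝔤' : A ∈ 𝔤' := by
        rw [hAspan]
        exact Submodule.mem_span_singleton_self A
      have htr : A e0 0 + A e1 1 = 0 := htr0 A hA𝔤'
      have hinj : ∀ v : Fin 2 → ℝ, A v = 0 → v = 0 := by
        intro v hv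
        obtain ⟨u, hu⟩ := hAu
        have h1 : ((↑u⁻¹ * ↑u : Module.End ℝ (Fin 2 → ℝ))) v = v := by
          rw [u.inv_mul]
          rfl
        rw [Module.End.mul_apply, hu, hv, map_zero] at h1
        exact h1.symm
      have hdetA : A e0 0 * A e1 1 - A e1 0 * A e0 1 ≠ 0 := by
        intro h0
        by_cases hab : A e0 0 = 0 ∧ A e1 0 = 0
        · by_cases hcd : A e0 1 = 0 ∧ A e1 1 = 0
          · have hA0 : A e0 = 0 := by
              apply V_ext
              · simpa using hab.1
              · simpa using hcd.1
            simpa using congrFun (hinj e0 hA0) 0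
          · have hv : A ![A e1 1, -(A e0 1)] = 0 := by
              apply V_ext
              · rw [comp A _ 0]
                simp [hab.1, hab.2]
              · rw [comp A _ 1]
                simp
                ring
            have h0' := congrFun (hinj _ hv) 0
            have h1' := congrFun (hinj _ hv) 1
            simp at h0' h1'
            exact hcd ⟨h1', h0'⟩
        · have hv : A ![A e1 0, -(A e0 0)] = 0 := by
            apply V_ext
            · rw [comp A _ 0]
              simp
              ring
            · rw [comp A _ 1]
              simp only [Matrix.cons_val_zero, Matrix.cons_val_one, Matrix.head_cons,
                Pi.zero_apply]
              linear_combination -h0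
          have h0' := congrFun (hinj _ hv) 0
          have h1' := congrFun (hinj _ hv) 1
          simp at h0' h1'
          exact hab ⟨h1', h0'⟩
      refine ⟨mkForm (-(A e0 1)) (A e0 0) (A e0 0) (A e1 0), ?_, ?_, ?_⟩
      · intro v hv
        have h0 := hv e0
        have h1 := hv e1
        rw [mkForm_apply] at h0 h1
        simp only [e0_0, e0_1, e1_0, e1_1, mul_one, mul_zero, add_zero, zero_add] at h0 h1
        have hv0 : v 0 = 0 := by
          have hz : (A e0 0 * A e1 1 - A e1 0 * A e0 1) * v 0 = 0 := by
            linear_combination A e1 0 * h0 - A e0 0 * h1 + (A e0 0 * v 0) * htr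
          exact (mul_eq_zero.mp hz).resolve_left hdetA
        have hv1 : v 1 = 0 := by
          have hz : (A e0 0 * A e1 1 - A e1 0 * A e0 1) * v 1 = 0 := by
            linear_combination (-(A e0 0)) * h0 - A e0 1 * h1 + (A e0 0 * v 1) * htr
          exact (mul_eq_zero.mp hz).resolve_left hdetA
        apply V_ext
        · simpa using hv0
        · simpa using hv1
      · intro v w
        rw [mkForm_apply, mkForm_apply]
        ring
      · intro X hX v w
        rw [hAspan, Submodule.mem_span_singleton] at hX
        obtain ⟨sX, rfl⟩ := hX
        have hbase : mkForm (-(A e0 1)) (A e0 0) (A e0 0) (A e1 0) (A v) w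
            + mkForm (-(A e0 1)) (A e0 0) (A e0 0) (A e1 0) v (A w) = 0 := by
          rw [mkForm_apply, mkForm_apply, comp A v 0, comp A v 1, comp A w 0, comp A w 1]
          linear_combination (A e0 0 * (v 0 * w 1) + A e0 0 * (v 1 * w 0)
            + 2 * A e1 0 * (v 1 * w 1)) * htr
        simp only [LinearMap.smul_apply, Pi.smul_apply, smul_eq_mul, map_smul]
        linear_combination sX * hbase
end

section
/- Let 𝔤 be a three-dimensional real Lie algebra whose derived algebra 𝔤' = [𝔤, 𝔤] is one-dimensional. Then the center 𝔷(𝔤) of 𝔤 is one-dimensional. -/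
/-- Let `𝔤` be a three-dimensional real Lie algebra whose derived algebra `𝔤' = [𝔤, 𝔤]`
(the span of all brackets) is one-dimensional. Then the center of `𝔤` is one-dimensional. -/
theorem stmt_12 {L : Type*} [LieRing L] [LieAlgebra ℝ L] [Module.Finite ℝ L]
    (hdim : Module.finrank ℝ L = 3)
    (hder : Module.finrank ℝ (Submodule.span ℝ {z : L | ∃ x y : L, z = ⁅x, y⁆}) = 1) :
    Module.finrank ℝ (LieAlgebra.center ℝ L) = 1 := by
  classical
  set D := Submodule.span ℝ {z : L | ∃ x y : L, z = ⁅x, y⁆} with hD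
  -- obtain a generator w of D
  obtain ⟨v, hv0, hvgen⟩ := (finrank_eq_one_iff' (K := ℝ) (V := D)).mp hder
  set w : L := (v : L) with hw
  have hwne : w ≠ 0 := fun h => hv0 (Subtype.ext h)
  -- a functional φ with φ w = 1
  obtain ⟨φ, hφ⟩ := (LinearMap.toSpanSingleton ℝ L w).exists_leftInverse_of_injective
    (LinearMap.ker_toSpanSingleton (R := ℝ) hwne)
  have hφw : φ w = 1 := by
    have := congrArg (fun f => f 1) hφ
    simpa [LinearMap.toSpanSingleton] using this
  -- every element of D is φ z • w
  have hmul : ∀ z ∈ D, z = φ z • w := by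
    intro z hz
    obtain ⟨c, hc⟩ := hvgen ⟨z, hz⟩
    have hc' : c • w = z := congrArg Subtype.val hc
    rw [← hc']
    simp [hφw]
  have hbr : ∀ x y : L, ⁅x, y⁆ = φ ⁅x, y⁆ • w := by
    intro x y
    exact hmul _ (Submodule.subset_span ⟨x, y, rfl⟩)
  -- the bilinear form T x y = φ ⁅x, y⁆
  set T : L →ₗ[ℝ] Module.Dual ℝ L :=
    (LinearMap.llcomp ℝ L L ℝ φ).comp (LinearMap.mk₂ ℝ (fun x y : L => ⁅x, y⁆) add_lie smul_lie lie_add lie_smul) with hT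
  have hTapp : ∀ x y : L, T x y = φ ⁅x, y⁆ := fun x y => rfl
  have halt : ∀ x : L, T x x = 0 := by intro x; simp [hTapp]
  have hskew : ∀ x y : L, T x y = - T y x := by
    intro x y
    simp only [hTapp, ← lie_skew x y, map_neg]
  -- center = ker T
  have hcen : (LieAlgebra.center ℝ L).toSubmodule = LinearMap.ker T := by
    ext x
    simp only [LieSubmodule.mem_toSubmodule, LieAlgebra.center,
      LieModule.mem_maxTrivSubmodule, LinearMap.mem_ker]
    constructor
    · intro h
      ext y
      have : ⁅x, y⁆ = 0 := by rw [← lie_skew, h y, neg_zero]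
      simp [hTapp, this]
    · intro h y
      have h1 : φ ⁅x, y⁆ = 0 := by rw [← hTapp, h]; rfl
      have h2 : ⁅x, y⁆ = 0 := by rw [hbr x y, h1, zero_smul]
      rw [← lie_skew, h2, neg_zero]
  -- some nonzero bracket
  have hex : ∃ x y : L, ⁅x, y⁆ ≠ 0 := by
    by_contra h
    push_neg at h
    have : D = ⊥ := by
      rw [hD, Submodule.span_eq_bot]
      rintro z ⟨x, y, rfl⟩
      exact h x y
    rw [this] at hder
    simp at hder
  obtain ⟨x₀, y₀, hxy⟩ := hex
  have hB0 : T x₀ y₀ ≠ 0 := by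
    intro h
    apply hxy
    rw [hbr x₀ y₀, ← hTapp, h, zero_smul]
  -- rank T ≥ 2
  have hind : LinearIndependent ℝ ![T x₀, T y₀] := by
    rw [LinearIndependent.pair_iff]
    intro a c hac
    have e1 := congrArg (fun f => f y₀) hac
    have e2 := congrArg (fun f => f x₀) hac
    simp only [LinearMap.add_apply, LinearMap.smul_apply, smul_eq_mul,
      LinearMap.zero_apply] at e1 e2
    rw [halt y₀, mul_zero, add_zero] at e1
    have ha : a = 0 := by
      rcases mul_eq_zero.mp e1 with h | h
      · exact h
      · exact absurd h hB0
    rw [halt x₀, mul_zero, zero_add] at e2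
    have hc : c = 0 := by
      rcases mul_eq_zero.mp e2 with h | h
      · exact h
      · exact absurd (by rw [hskew x₀ y₀, h, neg_zero] : T x₀ y₀ = 0) hB0
    exact ⟨ha, hc⟩
  have hrank2 : 2 ≤ Module.finrank ℝ (LinearMap.range T) := by
    have h1 : Submodule.span ℝ (Set.range ![T x₀, T y₀]) ≤ LinearMap.range T := by
      rw [Submodule.span_le]
      rintro f ⟨i, rfl⟩
      fin_cases i
      · exact ⟨x₀, rfl⟩
      · exact ⟨y₀, rfl⟩
    have h2 : Module.finrank ℝ (Submodule.span ℝ (Set.range ![T x₀, T y₀])) = 2 := by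
      rw [finrank_span_eq_card hind]
      simp
    rw [← h2]
    exact Submodule.finrank_mono h1
  -- rank T ≤ 2 via determinant
  have hb3 : Module.finrank ℝ L = 3 := hdim
  let b : Module.Basis (Fin 3) ℝ L := Module.finBasisOfFinrankEq ℝ L hb3
  set M : Matrix (Fin 3) (Fin 3) ℝ := Matrix.of fun i j => T (b i) (b j) with hM
  have hMt : Matrix.transpose M = -M := by
    ext i j
    simp [hM, Matrix.transpose_apply, hskew (b j) (b i)]
  have hdet : M.det = 0 := by
    have h1 : M.det = (Matrix.transpose M).det := (Matrix.det_transpose M).symm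
    rw [hMt, Matrix.det_neg] at h1
    simp at h1
    linarith
  obtain ⟨vv, hvv0, hvvm⟩ := (Matrix.exists_mulVec_eq_zero_iff).mpr hdet
  -- the corresponding x is in ker T and nonzero
  set x : L := ∑ j, vv j • b j with hx
  have hxne : x ≠ 0 := by
    intro h
    apply hvv0
    have : ∀ j, b.repr x j = vv j := by
      intro j
      rw [hx]
      simp [Finsupp.single_apply, Module.Basis.repr_self, Finset.sum_apply']
    funext j
    rw [← this j, h, map_zero]
    rfl
  have hker : x ∈ LinearMap.ker T := by
    have hy : ∀ i, T (b i) x = 0 := by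
      intro i
      have := congrFun hvvm i
      simp only [Matrix.mulVec, dotProduct, hM, Matrix.of_apply,
        Pi.zero_apply] at this
      rw [hx, map_sum]
      rw [← this]
      congr 1
      ext j
      rw [map_smul]
      simp [mul_comm]
    have hTx : ∀ y, T x y = 0 := by
      intro y
      have hyx : T y x = 0 := by
        have : (fun z => T z x) = fun z => ((T.flip x) z) := rfl
        have hflip : T.flip x = 0 := by
          apply b.ext
          intro i
          simp [LinearMap.flip_apply, hy i]
        calc T y x = T.flip x y := rfl
          _ = 0 := by rw [hflip]; rfl
      rw [hskew x y, hyx, neg_zero]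
    rw [LinearMap.mem_ker]
    ext y
    exact hTx y
  have hkerne : LinearMap.ker T ≠ ⊥ := by
    intro h
    rw [h] at hker
    exact hxne (Submodule.mem_bot ℝ |>.mp hker)
  have hker1 : 1 ≤ Module.finrank ℝ (LinearMap.ker T) := by
    rw [Nat.one_le_iff_ne_zero]
    intro h
    apply hkerne
    exact Submodule.finrank_eq_zero.mp h
  -- rank-nullity
  have hrn : Module.finrank ℝ (LinearMap.range T) + Module.finrank ℝ (LinearMap.ker T) = 3 := by
    rw [LinearMap.finrank_range_add_finrank_ker, hdim]
  have hker1' : Module.finrank ℝ (LinearMap.ker T) = 1 := by omega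
  have : Module.finrank ℝ (LieAlgebra.center ℝ L) =
      Module.finrank ℝ (LinearMap.ker T) := by
    rw [show Module.finrank ℝ (LieAlgebra.center ℝ L)
      = Module.finrank ℝ (LieAlgebra.center ℝ L).toSubmodule from rfl, hcen]
  rw [this, hker1']
end

section
/- Let 𝔤 be a three-dimensional real Lie algebra whose derived algebra 𝔤' = [𝔤, 𝔤] is one-dimensional. Then there exists a basis (X, Y, Z) of 𝔤 satisfying one of the following two sets of commutation relations: (1) [X,Y] = 0, [X,Z] = 0, [Y,Z] = X; or (2) [X,Y] = 0, [Y,Z] = 0, [Z,X] = X. -/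
/-- Let `𝔤` be a three-dimensional real Lie algebra whose derived algebra `𝔤' = [𝔤, 𝔤]`
(the span of all brackets) is one-dimensional. Then there is a basis `(X, Y, Z)` of `𝔤`
satisfying either `[X,Y] = 0, [X,Z] = 0, [Y,Z] = X` or `[X,Y] = 0, [Y,Z] = 0, [Z,X] = X`. -/
theorem stmt_13 {L : Type*} [LieRing L] [LieAlgebra ℝ L] [Module.Finite ℝ L]
    (hdim : Module.finrank ℝ L = 3)
    (hder : Module.finrank ℝ (Submodule.span ℝ {z : L | ∃ x y : L, z = ⁅x, y⁆}) = 1) :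
    ∃ b : Module.Basis (Fin 3) ℝ L,
      (⁅b 0, b 1⁆ = 0 ∧ ⁅b 0, b 2⁆ = 0 ∧ ⁅b 1, b 2⁆ = b 0) ∨
      (⁅b 0, b 1⁆ = 0 ∧ ⁅b 1, b 2⁆ = 0 ∧ ⁅b 2, b 0⁆ = b 0) := by
  classical
  set S := Submodule.span ℝ {z : L | ∃ x y : L, z = ⁅x, y⁆} with hSdef
  obtain ⟨v, hv0, hv⟩ := finrank_eq_one_iff'.mp hder
  set X : L := (v : L) with hXdef
  have hX0 : X ≠ 0 := fun h => hv0 (Subtype.ext h)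
  -- a linear functional with f X = 1
  have li : LinearIndepOn ℝ id ({X} : Set L) :=
    (linearIndepOn_singleton_iff ℝ).mpr hX0
  let b0 := Module.Basis.extend li
  have hXmem : X ∈ li.extend (Set.subset_univ _) :=
    li.subset_extend _ (Set.mem_singleton X)
  let f : L →ₗ[ℝ] ℝ := b0.coord ⟨X, hXmem⟩
  have hb0 : b0 ⟨X, hXmem⟩ = X := Module.Basis.extend_apply_self li ⟨X, hXmem⟩
  have hfX : f X = 1 := by
    calc f X = b0.coord ⟨X, hXmem⟩ (b0 ⟨X, hXmem⟩) := by rw [hb0]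
    _ = 1 := by simp
  -- every bracket is (f of it) • X
  have hbr : ∀ u w : L, ⁅u, w⁆ = f ⁅u, w⁆ • X := by
    intro u w
    have hz : ⁅u, w⁆ ∈ S := Submodule.subset_span ⟨u, w, rfl⟩
    obtain ⟨c, hc⟩ := hv ⟨⁅u, w⁆, hz⟩
    have hc' : c • X = ⁅u, w⁆ := congrArg Subtype.val hc
    have : f ⁅u, w⁆ = c := by rw [← hc', map_smul, hfX]; simp
    rw [this, hc']
  by_cases hC : ∀ y : L, ⁅X, y⁆ = 0
  · -- X central: Heisenberg case
    have hne : ∃ u w : L, f ⁅u, w⁆ ≠ 0 := by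
      by_contra h
      push_neg at h
      have hall : ∀ u w : L, ⁅u, w⁆ = (0 : L) := by
        intro u w; rw [hbr u w, h u w, zero_smul]
      have hSbot : S = ⊥ := by
        rw [hSdef, ← Submodule.span_empty (R := ℝ) (M := L)]
        apply le_antisymm
        · rw [Submodule.span_le]
          rintro z ⟨x, y, rfl⟩
          simp [hall x y]
        · exact Submodule.span_mono (Set.empty_subset _)
      rw [hSbot] at hder
      simp at hder
    obtain ⟨Y, w, hc⟩ := hne
    obtain ⟨c, hc0, hcb⟩ : ∃ c : ℝ, c ≠ 0 ∧ ⁅Y, w⁆ = c • X := ⟨f ⁅Y, w⁆, hc, hbr Y w⟩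
    set Z : L := c⁻¹ • w with hZdef
    have hYZ : ⁅Y, Z⁆ = X := by
      rw [hZdef, lie_smul, hcb, smul_smul, inv_mul_cancel₀ hc0, one_smul]
    have hfYZ : f ⁅Y, Z⁆ = 1 := by rw [hYZ, hfX]
    have lin : LinearIndependent ℝ ![X, Y, Z] := by
      rw [Fintype.linearIndependent_iff]
      intro g hg
      rw [Fin.sum_univ_three] at hg
      simp only [Matrix.cons_val_zero, Matrix.cons_val_one, Matrix.head_cons,
        Matrix.cons_val_two, Matrix.tail_cons] at hg
      have h1 : g 1 = 0 := by
        have := congrArg (fun t => f ⁅t, Z⁆) hg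
        simp only [add_lie, smul_lie, map_add, map_smul, hC, lie_self,
          map_zero, smul_zero, hfYZ, smul_eq_mul, mul_one, zero_add,
          add_zero, mul_zero] at this
        simpa using this
      have h2 : g 2 = 0 := by
        have := congrArg (fun t => f ⁅t, Y⁆) hg
        have hZY : f ⁅Z, Y⁆ = -1 := by
          rw [← lie_skew, map_neg, hfYZ]
        simp only [add_lie, smul_lie, map_add, map_smul, hC, lie_self,
          map_zero, smul_zero, hZY, smul_eq_mul, mul_neg,
          mul_one, zero_add, add_zero, mul_zero] at this
        simpa using this
      have h0 : g 0 = 0 := by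
        rw [h1, h2, zero_smul, zero_smul, add_zero, add_zero] at hg
        exact (smul_eq_zero.mp hg).resolve_right hX0
      intro i; fin_cases i <;> assumption
    have hcard : Fintype.card (Fin 3) = Module.finrank ℝ L := by simp [hdim]
    refine ⟨basisOfLinearIndependentOfCardEqFinrank lin hcard, Or.inl ?_⟩
    rw [show (basisOfLinearIndependentOfCardEqFinrank lin hcard : Fin 3 → L) = ![X, Y, Z]
      from coe_basisOfLinearIndependentOfCardEqFinrank lin hcard]
    refine ⟨?_, ?_, ?_⟩ <;> simp [hC, hYZ]
  · -- solvable non-nilpotent case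
    push_neg at hC
    obtain ⟨y, hy⟩ := hC
    have hcne : f ⁅X, y⁆ ≠ 0 := by
      intro h
      rw [hbr X y, h, zero_smul] at hy
      exact hy rfl
    obtain ⟨c, hc0, hcb⟩ : ∃ c : ℝ, c ≠ 0 ∧ ⁅X, y⁆ = c • X := ⟨f ⁅X, y⁆, hcne, hbr X y⟩
    set Z : L := (-c⁻¹) • y with hZdef
    have hyX : ⁅y, X⁆ = -(c • X) := by rw [← lie_skew, hcb]
    have hZX : ⁅Z, X⁆ = X := by
      rw [hZdef, smul_lie, hyX, smul_neg, neg_smul, neg_neg, smul_smul,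
        inv_mul_cancel₀ hc0, one_smul]
    -- find Y killed by bracketing with X and Z
    let g1 : L →ₗ[ℝ] ℝ := f ∘ₗ LieAlgebra.ad ℝ L X
    let g2 : L →ₗ[ℝ] ℝ := f ∘ₗ LieAlgebra.ad ℝ L Z
    let φ : L →ₗ[ℝ] ℝ × ℝ := g1.prod g2
    have hker : LinearMap.ker φ ≠ ⊥ := by
      intro h
      have h1 := LinearMap.finrank_range_add_finrank_ker φ
      rw [h, finrank_bot, add_zero, hdim] at h1
      have h2 : Module.finrank ℝ (LinearMap.range φ) ≤ 2 := by
        have := Submodule.finrank_le (LinearMap.range φ)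
        simpa using this
      omega
    obtain ⟨Y, hYk, hY0⟩ := (Submodule.ne_bot_iff _).mp hker
    have hXY : f ⁅X, Y⁆ = 0 := by
      have := congrArg Prod.fst (LinearMap.mem_ker.mp hYk)
      simpa [φ, g1, LieAlgebra.ad_apply] using this
    have hZY : f ⁅Z, Y⁆ = 0 := by
      have := congrArg Prod.snd (LinearMap.mem_ker.mp hYk)
      simpa [φ, g2, LieAlgebra.ad_apply] using this
    have hfZX : f ⁅Z, X⁆ = 1 := by rw [hZX, hfX]
    have hfXZ : f ⁅X, Z⁆ = -1 := by rw [← lie_skew, map_neg, hfZX]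
    have lin : LinearIndependent ℝ ![X, Y, Z] := by
      rw [Fintype.linearIndependent_iff]
      intro g hg
      rw [Fin.sum_univ_three] at hg
      simp only [Matrix.cons_val_zero, Matrix.cons_val_one, Matrix.head_cons,
        Matrix.cons_val_two, Matrix.tail_cons] at hg
      have h0 : g 0 = 0 := by
        have := congrArg (fun t => f ⁅Z, t⁆) hg
        simp only [lie_add, lie_smul, map_add, map_smul, hfZX, hZY, lie_self,
          map_zero, smul_zero, smul_eq_mul, mul_one, mul_zero, add_zero] at this
        simpa using this
      have h2 : g 2 = 0 := by
        have := congrArg (fun t => f ⁅X, t⁆) hg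
        simp only [lie_add, lie_smul, map_add, map_smul, lie_self, map_zero,
          smul_zero, hXY, hfXZ, smul_eq_mul, mul_neg, mul_one, mul_zero,
          zero_add] at this
        simpa using this
      have h1 : g 1 = 0 := by
        rw [h0, h2, zero_smul, zero_smul, zero_add, add_zero] at hg
        exact (smul_eq_zero.mp hg).resolve_right hY0
      intro i; fin_cases i <;> assumption
    have hcard : Fintype.card (Fin 3) = Module.finrank ℝ L := by simp [hdim]
    refine ⟨basisOfLinearIndependentOfCardEqFinrank lin hcard, Or.inr ?_⟩
    rw [show (basisOfLinearIndependentOfCardEqFinrank lin hcard : Fin 3 → L) = ![X, Y, Z]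
      from coe_basisOfLinearIndependentOfCardEqFinrank lin hcard]
    have b01 : ⁅X, Y⁆ = 0 := by rw [hbr X Y, hXY, zero_smul]
    have hfYZ : f ⁅Y, Z⁆ = 0 := by rw [← lie_skew, map_neg, hZY, neg_zero]
    have b12 : ⁅Y, Z⁆ = 0 := by rw [hbr Y Z, hfYZ, zero_smul]
    refine ⟨?_, ?_, ?_⟩ <;> simp [b01, b12, hZX]
end

section
/- Let 𝔤 be a three-dimensional Lie subalgebra of the Lie algebra 𝔤𝔩(2,ℝ) of linear endomorphisms of ℝ² (under the commutator bracket), whose derived algebra 𝔤' = [𝔤, 𝔤] is one-dimensional. Then the identity endomorphism Id belongs to 𝔤. -/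
attribute [local instance 100] LieRing.ofAssociativeRing

set_option maxHeartbeats 1000000 in
/-- Let `𝔤` be a three-dimensional Lie subalgebra of `𝔤𝔩(2,ℝ)` whose derived algebra
`𝔤' = [𝔤, 𝔤]` (the span of all brackets of elements of `𝔤`) is one-dimensional. Then the
identity endomorphism belongs to `𝔤`. -/
theorem stmt_14 (𝔤 : LieSubalgebra ℝ (Module.End ℝ (Fin 2 → ℝ)))
    (hdim : Module.finrank ℝ 𝔤 = 3)
    (hder : Module.finrank ℝ
      (Submodule.span ℝ {z : Module.End ℝ (Fin 2 → ℝ) | ∃ x ∈ 𝔤, ∃ y ∈ 𝔤, z = ⁅x, y⁆}) = 1) :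
    (1 : Module.End ℝ (Fin 2 → ℝ)) ∈ 𝔤 := by
  by_contra h1
  set S := Submodule.span ℝ {z : Module.End ℝ (Fin 2 → ℝ) | ∃ x ∈ 𝔤, ∃ y ∈ 𝔤, z = ⁅x, y⁆} with hS
  have hdisj : Disjoint 𝔤.toSubmodule (Submodule.span ℝ {(1 : Module.End ℝ (Fin 2 → ℝ))}) := by
    rw [Submodule.disjoint_span_singleton]
    intro h; exact absurd h h1
  have hrank4 : Module.finrank ℝ (Module.End ℝ (Fin 2 → ℝ)) = 4 := by
    rw [Module.finrank_linearMap]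
    simp
  have htop : 𝔤.toSubmodule ⊔ Submodule.span ℝ {(1 : Module.End ℝ (Fin 2 → ℝ))} = ⊤ := by
    apply Submodule.eq_top_of_finrank_eq
    have h2 := Submodule.finrank_sup_add_finrank_inf_eq 𝔤.toSubmodule
      (Submodule.span ℝ {(1 : Module.End ℝ (Fin 2 → ℝ))})
    rw [hdisj.eq_bot] at h2
    simp only [finrank_bot, add_zero] at h2
    have h3 : Module.finrank ℝ 𝔤.toSubmodule = 3 := hdim
    rw [h2, hrank4, h3, finrank_span_singleton (one_ne_zero)]
  have hcomm : ∀ A B : Module.End ℝ (Fin 2 → ℝ), ⁅A, B⁆ ∈ S := by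
    intro A B
    have hA : A ∈ 𝔤.toSubmodule ⊔ Submodule.span ℝ {(1 : Module.End ℝ (Fin 2 → ℝ))} := by
      rw [htop]; trivial
    have hB : B ∈ 𝔤.toSubmodule ⊔ Submodule.span ℝ {(1 : Module.End ℝ (Fin 2 → ℝ))} := by
      rw [htop]; trivial
    obtain ⟨x, hx, r, hr, rfl⟩ := Submodule.mem_sup.mp hA
    obtain ⟨y, hy, s, hs, rfl⟩ := Submodule.mem_sup.mp hB
    obtain ⟨a, rfl⟩ := Submodule.mem_span_singleton.mp hr
    obtain ⟨b, rfl⟩ := Submodule.mem_span_singleton.mp hs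
    have : ⁅x + a • (1 : Module.End ℝ (Fin 2 → ℝ)), y + b • 1⁆ = ⁅x, y⁆ := by
      simp [Ring.lie_def, mul_add, add_mul, smul_smul, mul_comm]
      abel
    rw [this]
    exact Submodule.subset_span ⟨x, hx, y, hy, rfl⟩
  set φ := Matrix.toLinAlgEquiv' (R := ℝ) (n := Fin 2) with hφ
  have hbr : ∀ M N : Matrix (Fin 2) (Fin 2) ℝ, ⁅φ M, φ N⁆ = φ (M * N - N * M) := by
    intro M N
    simp [Ring.lie_def, map_sub, map_mul]
  set w : Fin 3 → Matrix (Fin 2) (Fin 2) ℝ :=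
    ![!![1,0;0,-1], !![0,2;0,0], !![0,0;-2,0]] with hw
  set v : Fin 3 → Module.End ℝ (Fin 2 → ℝ) := fun i => φ (w i) with hv
  have hmemS : ∀ i, v i ∈ S := by
    intro i
    fin_cases i
    · have := hcomm (φ !![0,1;0,0]) (φ !![0,0;1,0])
      rwa [hbr, show (!![0,1;0,0] * !![0,0;1,0] - !![0,0;1,0] * !![(0:ℝ),1;0,0]) = !![1,0;0,-1] by
        ext i j; fin_cases i <;> fin_cases j <;> norm_num [Matrix.mul_apply, Fin.sum_univ_succ]] at this
    · have := hcomm (φ !![1,0;0,-1]) (φ !![0,1;0,0])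
      rwa [hbr, show (!![1,0;0,-1] * !![0,1;0,0] - !![0,1;0,0] * !![(1:ℝ),0;0,-1]) = !![0,2;0,0] by
        ext i j; fin_cases i <;> fin_cases j <;> norm_num [Matrix.mul_apply, Fin.sum_univ_succ]] at this
    · have := hcomm (φ !![1,0;0,-1]) (φ !![0,0;1,0])
      rwa [hbr, show (!![1,0;0,-1] * !![0,0;1,0] - !![0,0;1,0] * !![(1:ℝ),0;0,-1]) = !![0,0;-2,0] by
        ext i j; fin_cases i <;> fin_cases j <;> norm_num [Matrix.mul_apply, Fin.sum_univ_succ]] at this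
  have hwind : LinearIndependent ℝ w := by
    rw [Fintype.linearIndependent_iff]
    intro g hg
    simp only [hw, Fin.sum_univ_three, Matrix.cons_val_zero, Matrix.cons_val_one,
      Matrix.head_cons, Matrix.cons_val_two, Matrix.tail_cons] at hg
    have h00 := congrFun (congrFun hg 0) 0
    have h01 := congrFun (congrFun hg 0) 1
    have h10 := congrFun (congrFun hg 1) 0
    norm_num [Matrix.add_apply, Matrix.smul_apply, Matrix.zero_apply,
      Matrix.cons_val_zero, Matrix.cons_val_one, Matrix.head_cons] at h00 h01 h10
    intro i
    fin_cases i
    · exact h00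
    · exact h01
    · exact h10
  have hind : LinearIndependent ℝ v := by
    have := hwind.map' φ.toLinearMap (LinearMap.ker_eq_bot.mpr φ.injective)
    exact this
  have hle : Submodule.span ℝ (Set.range v) ≤ S := Submodule.span_le.mpr (by
    rintro z ⟨i, rfl⟩; exact hmemS i)
  have h3 : (3 : ℕ) ≤ Module.finrank ℝ S := by
    have hcard := finrank_span_eq_card hind
    calc (3:ℕ) = Module.finrank ℝ (Submodule.span ℝ (Set.range v)) := by rw [hcard]; simp
    _ ≤ Module.finrank ℝ S := Submodule.finrank_mono hle
  omega
end

section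
/- Let 𝔤 be a three-dimensional Lie subalgebra of the Lie algebra 𝔤𝔩(2,ℝ) of linear endomorphisms of ℝ² (under the commutator bracket), whose derived algebra 𝔤' = [𝔤, 𝔤] is one-dimensional. Then there exists a basis (X, Y, Z) of 𝔤 with Y = Id (the identity endomorphism) and [Z, X] = X. -/
open Module Submodule
attribute [local instance 100] LieRing.ofAssociativeRing
abbrev E2 := Module.End ℝ (Fin 2 → ℝ)

lemma brk_smul (c : ℝ) (x y : E2) : ⁅c • x, y⁆ = c • ⁅x, y⁆ := smul_lie c x y
lemma brk_smul' (c : ℝ) (x y : E2) : ⁅x, c • y⁆ = c • ⁅x, y⁆ := lie_smul c x y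

lemma cent2mat (A B : Matrix (Fin 2) (Fin 2) ℝ) (hc : A * B = B * A)
    (hns : ∀ c : ℝ, A ≠ c • 1) : ∃ a b : ℝ, B = a • 1 + b • A := by
  have e : ∀ i j, (A * B) i j = (B * A) i j := fun i j => by rw [hc]
  simp only [Matrix.mul_apply, Fin.sum_univ_two] at e
  have e00 := e 0 0; have e01 := e 0 1; have e10 := e 1 0; have e11 := e 1 1
  by_cases hq : A 0 1 ≠ 0
  · refine ⟨B 0 0 - B 0 1 / A 0 1 * A 0 0, B 0 1 / A 0 1, ?_⟩
    ext i j; fin_cases i <;> fin_cases j <;>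
      simp [Matrix.one_apply] <;> field_simp <;> linarith [e00, e01, e10, e11]
  · by_cases hr : A 1 0 ≠ 0
    · refine ⟨B 0 0 - B 1 0 / A 1 0 * A 0 0, B 1 0 / A 1 0, ?_⟩
      ext i j; fin_cases i <;> fin_cases j <;>
        simp [Matrix.one_apply] <;> field_simp <;> linarith [e00, e01, e10, e11]
    · push_neg at hq hr
      have hd : A 0 0 ≠ A 1 1 := by
        intro h
        apply hns (A 0 0)
        ext i j; fin_cases i <;> fin_cases j <;> simp [Matrix.one_apply, hq, hr, h]
      refine ⟨B 0 0 - (B 0 0 - B 1 1) / (A 0 0 - A 1 1) * A 0 0,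
        (B 0 0 - B 1 1) / (A 0 0 - A 1 1), ?_⟩
      have hd' : A 0 0 - A 1 1 ≠ 0 := sub_ne_zero.2 hd
      have hB01 : B 0 1 = 0 := by
        have h0 : B 0 1 * (A 1 1 - A 0 0) = 0 := by rw [hq] at e01; linarith
        rcases mul_eq_zero.1 h0 with h | h
        · exact h
        · exact absurd (by linarith [sub_eq_zero.1 h] : A 0 0 = A 1 1) hd
      have hB10 : B 1 0 = 0 := by
        have h0 : B 1 0 * (A 1 1 - A 0 0) = 0 := by rw [hr] at e10; linarith
        rcases mul_eq_zero.1 h0 with h | h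
        · exact h
        · exact absurd (by linarith [sub_eq_zero.1 h] : A 0 0 = A 1 1) hd
      ext i j
      fin_cases i <;> fin_cases j <;>
        simp [Matrix.one_apply, hq, hr, hB01, hB10] <;> field_simp <;> ring

lemma centE (A B : E2) (hc : A * B = B * A)
    (hns : ∀ c : ℝ, A ≠ c • 1) : ∃ a b : ℝ, B = a • 1 + b • A := by
  set eqm : E2 ≃ₐ[ℝ] Matrix (Fin 2) (Fin 2) ℝ :=
    LinearMap.toMatrixAlgEquiv (Pi.basisFun ℝ (Fin 2)) with heqm
  obtain ⟨a, b, h⟩ := cent2mat (eqm A) (eqm B) (by rw [← map_mul, ← map_mul, hc])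
    (fun c hcon => hns c (by apply eqm.injective; rw [hcon]; simp))
  refine ⟨a, b, ?_⟩
  apply eqm.injective
  simp [h]

lemma one_mem (𝔤 : LieSubalgebra ℝ E2) (X Z : E2) (hX𝔤 : X ∈ 𝔤) (hZ𝔤 : Z ∈ 𝔤)
    (hbne : X ≠ 0) (hns : ∀ c : ℝ, X ≠ c • 1)
    (hdim' : Module.finrank ℝ (𝔤 : Submodule ℝ E2) = 3)
    (hbrX : ∀ a ∈ 𝔤, ⁅a, X⁆ ∈ Submodule.span ℝ ({X} : Set E2))
    (hbrZ : ∀ a ∈ 𝔤, ⁅a, Z⁆ ∈ Submodule.span ℝ ({X} : Set E2))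
    (hZX : ⁅Z, X⁆ = X) : (1 : E2) ∈ 𝔤 := by
  set f1 : (𝔤 : Submodule ℝ E2) →ₗ[ℝ] E2 :=
    (LinearMap.mulRight ℝ X - LinearMap.mulLeft ℝ X).comp (𝔤 : Submodule ℝ E2).subtype with hf1
  set f2 : (𝔤 : Submodule ℝ E2) →ₗ[ℝ] E2 :=
    (LinearMap.mulRight ℝ Z - LinearMap.mulLeft ℝ Z).comp (𝔤 : Submodule ℝ E2).subtype with hf2
  have hker : ∀ (f : (𝔤 : Submodule ℝ E2) →ₗ[ℝ] E2), (∀ a : (𝔤 : Submodule ℝ E2),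
      f a ∈ Submodule.span ℝ ({X} : Set E2)) → 2 ≤ Module.finrank ℝ (LinearMap.ker f) := by
    intro f hf
    have hrange : LinearMap.range f ≤ Submodule.span ℝ ({X} : Set E2) := by
      rintro _ ⟨a, rfl⟩; exact hf a
    have h1 : Module.finrank ℝ (LinearMap.range f) ≤ 1 := by
      refine le_trans (Submodule.finrank_mono hrange) ?_
      rw [finrank_span_singleton hbne]
    have hrn := LinearMap.finrank_range_add_finrank_ker f
    omega
  have hk1 : 2 ≤ Module.finrank ℝ (LinearMap.ker f1) := by
    refine hker f1 ?_
    rintro ⟨a, ha⟩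
    have hfa : f1 ⟨a, ha⟩ = ⁅a, X⁆ := by simp [hf1, Ring.lie_def]
    rw [hfa]
    exact hbrX a ha
  have hk2 : 2 ≤ Module.finrank ℝ (LinearMap.ker f2) := by
    refine hker f2 ?_
    rintro ⟨a, ha⟩
    have hfa : f2 ⟨a, ha⟩ = ⁅a, Z⁆ := by simp [hf2, Ring.lie_def]
    rw [hfa]
    exact hbrZ a ha
  have hsum := Submodule.finrank_sup_add_finrank_inf_eq (LinearMap.ker f1) (LinearMap.ker f2)
  have hsup : Module.finrank ℝ ↥(LinearMap.ker f1 ⊔ LinearMap.ker f2) ≤ 3 := by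
    have hfl := Submodule.finrank_le (LinearMap.ker f1 ⊔ LinearMap.ker f2)
    omega
  have hpos : 0 < Module.finrank ℝ ↥(LinearMap.ker f1 ⊓ LinearMap.ker f2) := by omega
  have hnb : LinearMap.ker f1 ⊓ LinearMap.ker f2 ≠ ⊥ := by
    intro hbot
    rw [hbot, finrank_bot] at hpos
    exact lt_irrefl 0 hpos
  obtain ⟨W, hWmem, hWne⟩ := Submodule.exists_mem_ne_zero_of_ne_bot hnb
  obtain ⟨hW1, hW2⟩ := Submodule.mem_inf.1 hWmem
  rw [LinearMap.mem_ker] at hW1 hW2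
  have hc1 : X * (W : E2) = (W : E2) * X := by
    have h0 : (W : E2) * X - X * (W : E2) = 0 := by simpa [hf1] using hW1
    rw [sub_eq_zero] at h0; exact h0.symm
  have hc2 : (W : E2) * Z - Z * (W : E2) = 0 := by simpa [hf2] using hW2
  obtain ⟨a, b, hab⟩ := centE X (W : E2) hc1 hns
  have hb0 : b = 0 := by
    have hzx : ⁅(W : E2), Z⁆ = 0 := by rw [Ring.lie_def]; exact hc2
    have h1Z : ⁅(1 : E2), Z⁆ = 0 := by rw [Ring.lie_def]; simp
    have hXZ : ⁅X, Z⁆ = -X := by rw [← lie_skew, hZX]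
    rw [hab] at hzx
    rw [add_lie, brk_smul, brk_smul, h1Z, hXZ, smul_zero, zero_add, smul_neg] at hzx
    have hbX : b • X = 0 := neg_eq_zero.1 hzx
    rcases smul_eq_zero.1 hbX with h | h
    · exact h
    · exact absurd h hbne
  have ha0 : a ≠ 0 := by
    rintro rfl
    rw [hb0] at hab
    simp at hab
    exact hWne hab
  have hW1' : (1 : E2) = a⁻¹ • (W : E2) := by
    rw [hab, hb0, zero_smul, add_zero, smul_smul, inv_mul_cancel₀ ha0, one_smul]
  rw [hW1']
  exact 𝔤.toSubmodule.smul_mem _ W.2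

/-- Let `𝔤` be a three-dimensional Lie subalgebra of `𝔤𝔩(2,ℝ)` whose derived algebra
`𝔤' = [𝔤, 𝔤]` (the span of all brackets of elements of `𝔤`) is one-dimensional. Then there
exists a basis `(X, Y, Z)` of `𝔤` with `Y = Id` and `[Z, X] = X`. -/
theorem stmt_15 (𝔤 : LieSubalgebra ℝ (Module.End ℝ (Fin 2 → ℝ)))
    (hdim : Module.finrank ℝ 𝔤 = 3)
    (hder : Module.finrank ℝ
      (Submodule.span ℝ {z : Module.End ℝ (Fin 2 → ℝ) | ∃ x ∈ 𝔤, ∃ y ∈ 𝔤, z = ⁅x, y⁆}) = 1) :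
    ∃ b : Module.Basis (Fin 3) ℝ 𝔤,
      (b 1 : Module.End ℝ (Fin 2 → ℝ)) = 1 ∧
      ⁅(b 2 : Module.End ℝ (Fin 2 → ℝ)), (b 0 : Module.End ℝ (Fin 2 → ℝ))⁆
        = (b 0 : Module.End ℝ (Fin 2 → ℝ)) := by
  set S : Set E2 := {z : E2 | ∃ x ∈ 𝔤, ∃ y ∈ 𝔤, z = ⁅x, y⁆} with hS
  have hdim' : Module.finrank ℝ (𝔤 : Submodule ℝ E2) = 3 := hdim
  -- some bracket is nonzero
  have hex : ∃ u ∈ 𝔤, ∃ w ∈ 𝔤, ⁅u, w⁆ ≠ (0 : E2) := by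
    by_contra h
    push_neg at h
    have hsub : S ⊆ {0} := by
      rintro z ⟨x, hx, y, hy, rfl⟩
      exact h x hx y hy
    have : Submodule.span ℝ S ≤ ⊥ := by
      rw [← Submodule.span_zero_singleton (R := ℝ) (M := E2)]
      exact Submodule.span_mono hsub
    rw [le_bot_iff] at this
    rw [this] at hder
    simp at hder
  obtain ⟨u, hu, w, hw, hbne⟩ := hex
  set X : E2 := ⁅u, w⁆ with hXdef
  have hX𝔤 : X ∈ 𝔤 := 𝔤.lie_mem hu hw
  have hXS : X ∈ S := ⟨u, hu, w, hw, rfl⟩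
  -- the derived span is ℝ ∙ X
  have hDeq : Submodule.span ℝ S = Submodule.span ℝ {X} := by
    refine (Submodule.eq_of_le_of_finrank_le (Submodule.span_mono ?_) ?_).symm
    · simpa using hXS
    · rw [hder, finrank_span_singleton hbne]
  have hbr : ∀ a ∈ 𝔤, ∀ b ∈ 𝔤, ∃ c : ℝ, ⁅a, b⁆ = c • X := by
    intro a ha b hb
    have : ⁅a, b⁆ ∈ Submodule.span ℝ {X} := by
      rw [← hDeq]; exact Submodule.subset_span ⟨a, ha, b, hb, rfl⟩
    obtain ⟨c, hc⟩ := Submodule.mem_span_singleton.1 this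
    exact ⟨c, hc.symm⟩
  -- X is nonscalar
  have htr : LinearMap.trace ℝ (Fin 2 → ℝ) X = 0 := by
    rw [hXdef, Ring.lie_def, map_sub, LinearMap.trace_mul_comm, sub_self]
  have hns : ∀ c : ℝ, X ≠ c • 1 := by
    intro c hcon
    rw [hcon, map_smul, LinearMap.trace_one] at htr
    have hc0 : c = 0 := by simpa using htr
    rw [hc0] at hcon
    simp at hcon
    exact hbne hcon
  -- find Z with ⁅Z, X⁆ = X
  have hZex : ∃ Z ∈ 𝔤, ⁅Z, X⁆ = X := by
    by_cases hz : ∃ z ∈ 𝔤, ⁅z, X⁆ ≠ (0 : E2)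
    · obtain ⟨z, hz𝔤, hzne⟩ := hz
      obtain ⟨c, hc⟩ := hbr z hz𝔤 X hX𝔤
      have hcne : c ≠ 0 := by rintro rfl; simp at hc; exact hzne hc
      refine ⟨c⁻¹ • z, 𝔤.toSubmodule.smul_mem _ hz𝔤, ?_⟩
      rw [brk_smul, hc, smul_smul, inv_mul_cancel₀ hcne, one_smul]
    · push_neg at hz
      exfalso
      have hle : (𝔤 : Submodule ℝ E2) ≤ Submodule.span ℝ ({1, X} : Set E2) := by
        intro z hz𝔤
        have hcomm : X * z = z * X := by
          have h0 := hz z hz𝔤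
          rw [Ring.lie_def, sub_eq_zero] at h0
          exact h0.symm
        obtain ⟨a, b, hab⟩ := centE X z hcomm hns
        rw [hab]
        exact Submodule.add_mem _ (Submodule.smul_mem _ _ (Submodule.subset_span (by simp)))
          (Submodule.smul_mem _ _ (Submodule.subset_span (by simp)))
      have h2 : Module.finrank ℝ (Submodule.span ℝ ({1, X} : Set E2)) ≤ 2 := by
        have hins : Submodule.span ℝ ({1, X} : Set E2)
            = Submodule.span ℝ ({1} : Set E2) ⊔ Submodule.span ℝ ({X} : Set E2) :=
          Submodule.span_insert (1 : E2) {X}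
        rw [hins]
        have hsum := Submodule.finrank_sup_add_finrank_inf_eq
          (Submodule.span ℝ ({1} : Set E2)) (Submodule.span ℝ ({X} : Set E2))
        have hA : Module.finrank ℝ (Submodule.span ℝ ({1} : Set E2)) = 1 :=
          finrank_span_singleton one_ne_zero
        have hB : Module.finrank ℝ (Submodule.span ℝ ({X} : Set E2)) = 1 :=
          finrank_span_singleton hbne
        omega
      have hmono := Submodule.finrank_mono hle
      rw [hdim'] at hmono
      have := hmono.trans h2
      norm_num at this
  obtain ⟨Z, hZ𝔤, hZX⟩ := hZex
  -- the identity is in 𝔤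
  have h1𝔤 : (1 : E2) ∈ 𝔤 := by
    refine one_mem 𝔤 X Z hX𝔤 hZ𝔤 hbne hns hdim' ?_ ?_ hZX
    · intro a ha
      rw [← hDeq]
      exact Submodule.subset_span ⟨a, ha, X, hX𝔤, rfl⟩
    · intro a ha
      rw [← hDeq]
      exact Submodule.subset_span ⟨a, ha, Z, hZ𝔤, rfl⟩
  -- linear independence
  have hliE : LinearIndependent ℝ ![X, (1 : E2), Z] := by
    rw [Fintype.linearIndependent_iff]
    intro g hg
    rw [Fin.sum_univ_three] at hg
    simp only [Matrix.cons_val_zero, Matrix.cons_val_one, Matrix.head_cons,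
      Matrix.cons_val_two, Matrix.tail_cons] at hg
    have hg0 : g 0 = 0 := by
      have h := congrArg (fun t => ⁅Z, t⁆) hg
      simp only [lie_add, brk_smul', lie_zero] at h
      have h1Z : ⁅Z, (1 : E2)⁆ = 0 := by rw [Ring.lie_def]; simp
      rw [hZX, h1Z, lie_self, smul_zero, smul_zero, add_zero, add_zero] at h
      rcases smul_eq_zero.1 h with h' | h'
      · exact h'
      · exact absurd h' hbne
    rw [hg0, zero_smul, zero_add] at hg
    have hg2 : g 2 = 0 := by
      have h := congrArg (fun t => ⁅t, X⁆) hg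
      have h1X : ⁅(1 : E2), X⁆ = 0 := by rw [Ring.lie_def]; simp
      simp only [add_lie, brk_smul, zero_lie] at h
      rw [h1X, hZX, smul_zero, zero_add] at h
      rcases smul_eq_zero.1 h with h' | h'
      · exact h'
      · exact absurd h' hbne
    rw [hg2, zero_smul, add_zero] at hg
    have hg1 : g 1 = 0 := by
      rcases smul_eq_zero.1 hg with h | h
      · exact h
      · exact absurd h one_ne_zero
    intro i
    fin_cases i
    · exact hg0
    · exact hg1
    · exact hg2
  set v : Fin 3 → (𝔤 : Submodule ℝ E2) := ![⟨X, hX𝔤⟩, ⟨1, h1𝔤⟩, ⟨Z, hZ𝔤⟩] with hv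
  have hcomp : ((𝔤 : Submodule ℝ E2).subtype) ∘ v = ![X, (1 : E2), Z] := by
    ext i : 1
    fin_cases i <;> rfl
  have hli : LinearIndependent ℝ v := by
    rw [← LinearMap.linearIndependent_iff ((𝔤 : Submodule ℝ E2).subtype)
      (Submodule.ker_subtype _)]
    rw [hcomp]
    exact hliE
  have hcard : Fintype.card (Fin 3) = Module.finrank ℝ (𝔤 : Submodule ℝ E2) := by
    simp [hdim']
  refine ⟨basisOfLinearIndependentOfCardEqFinrank hli hcard, ?_, ?_⟩
  · rw [coe_basisOfLinearIndependentOfCardEqFinrank]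
    rfl
  · rw [coe_basisOfLinearIndependentOfCardEqFinrank]
    show ⁅Z, X⁆ = X
    exact hZX
end

section
/- There is no Lie subalgebra 𝔤 of the Lie algebra 𝔤𝔩(2,ℝ) of linear endomorphisms of ℝ² (under the commutator bracket) whose derived algebra 𝔤' = [𝔤, 𝔤] is one-dimensional and spanned by an invertible endomorphism. Equivalently, if 𝔤 ⊆ 𝔤𝔩(2,ℝ) is a Lie subalgebra with dim 𝔤' = 1, then every element of 𝔤' is non-invertible. -/
attribute [local instance 100] LieRing.ofAssociativeRing

/-- There is no Lie subalgebra of `𝔤𝔩(2,ℝ)` whose derived algebra is one-dimensional and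
spanned by an invertible endomorphism: if `𝔤 ⊆ 𝔤𝔩(2,ℝ)` is a Lie subalgebra whose derived
algebra `𝔤' = [𝔤, 𝔤]` (the span of all brackets of elements of `𝔤`) is one-dimensional,
then every element of `𝔤'` is non-invertible. -/
theorem stmt_18 (𝔤 : LieSubalgebra ℝ (Module.End ℝ (Fin 2 → ℝ)))
    (𝔤' : Submodule ℝ (Module.End ℝ (Fin 2 → ℝ)))
    (h𝔤' : 𝔤' = Submodule.span ℝ {z | ∃ x ∈ 𝔤, ∃ y ∈ 𝔤, z = ⁅x, y⁆})
    (hdim : Module.finrank ℝ 𝔤' = 1) :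
    ∀ A ∈ 𝔤', ¬ IsUnit A := by
  intro A hA hU
  set T := LinearMap.trace ℝ (Fin 2 → ℝ) with hT
  have hA0 : A ≠ 0 := hU.ne_zero
  -- 𝔤' = span {A}
  have hspanle : Submodule.span ℝ {A} ≤ 𝔤' := by
    rw [Submodule.span_le, Set.singleton_subset_iff]; exact hA
  have hspan : Submodule.span ℝ {A} = 𝔤' :=
    Submodule.eq_of_le_of_finrank_eq hspanle (by rw [hdim, finrank_span_singleton hA0])
  -- 𝔤' ≤ 𝔤
  have hle : 𝔤' ≤ 𝔤.toSubmodule := by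
    rw [h𝔤', Submodule.span_le]
    rintro z ⟨x, hx, y, hy, rfl⟩
    exact 𝔤.lie_mem hx hy
  have hAg : A ∈ 𝔤 := hle hA
  -- trace of every element of 𝔤' is zero
  have htr0 : ∀ B ∈ 𝔤', T B = 0 := by
    rw [h𝔤']
    intro B hB
    induction hB using Submodule.span_induction with
    | mem z hz => obtain ⟨x, _, y, _, rfl⟩ := hz; exact LinearMap.trace_lie x y
    | zero => simp
    | add a b _ _ ha hb => rw [map_add, ha, hb, add_zero]
    | smul c a _ ha => rw [map_smul, ha, smul_zero]
  have htrA : T A = 0 := htr0 A hA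
  -- trace of A * A is nonzero (from invertibility and trace A = 0)
  have hdet : LinearMap.det A ≠ 0 := by
    have := A.isUnit_det hU
    exact this.ne_zero
  have htrAA : T (A * A) ≠ 0 := by
    set b := Pi.basisFun ℝ (Fin 2)
    set M := LinearMap.toMatrix b b A with hM
    have hdetM : M.det ≠ 0 := by rwa [hM, LinearMap.det_toMatrix]
    have h1 : T A = M.trace := LinearMap.trace_eq_matrix_trace ℝ b A
    have h2 : T (A * A) = (M * M).trace := by
      rw [hT, LinearMap.trace_eq_matrix_trace ℝ b, LinearMap.toMatrix_mul]
    rw [h2]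
    rw [h1] at htrA
    rw [Matrix.det_fin_two] at hdetM
    have e1 : M.trace = M 0 0 + M 1 1 := by
      simp [Matrix.trace, Matrix.diag, Fin.sum_univ_two]
    have e2 : (M * M).trace = M 0 0 * M 0 0 + M 0 1 * M 1 0
        + (M 1 0 * M 0 1 + M 1 1 * M 1 1) := by
      simp [Matrix.trace, Matrix.diag, Matrix.mul_apply, Fin.sum_univ_two]
    rw [e1] at htrA
    rw [e2]
    intro h
    apply hdetM
    nlinarith [htrA, h]
  -- every bracket with A vanishes
  have hbrA : ∀ x ∈ 𝔤, ⁅x, A⁆ = 0 := by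
    intro x hx
    have hmem : ⁅x, A⁆ ∈ 𝔤' := by
      rw [h𝔤']; exact Submodule.subset_span ⟨x, hx, A, hAg, rfl⟩
    rw [← hspan, Submodule.mem_span_singleton] at hmem
    obtain ⟨c, hc⟩ := hmem
    have htc : T (⁅x, A⁆ * A) = 0 := by
      simp only [Ring.lie_def, sub_mul, map_sub, hT, mul_assoc]
      rw [LinearMap.trace_mul_comm ℝ A (x * A), mul_assoc, sub_self]
    rw [← hc, smul_mul_assoc, map_smul, smul_eq_mul] at htc
    have hc0 : c = 0 := by
      rcases mul_eq_zero.1 htc with h | h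
      · exact h
      · exact absurd h htrAA
    rw [← hc, hc0, zero_smul]
  -- hence trace (B * A) = 0 for all B ∈ 𝔤'
  have hfin : ∀ B ∈ 𝔤', T (B * A) = 0 := by
    rw [h𝔤']
    intro B hB
    induction hB using Submodule.span_induction with
    | mem z hz =>
      obtain ⟨x, hx, y, hy, rfl⟩ := hz
      have key : T (⁅x, y⁆ * A) = T (x * ⁅y, A⁆) := by
        simp only [Ring.lie_def, sub_mul, mul_sub, map_sub, hT, mul_assoc]
        rw [LinearMap.trace_mul_comm ℝ y (x * A), mul_assoc]
      rw [key, hbrA y hy, mul_zero, map_zero]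
    | zero => simp
    | add a b _ _ ha hb => rw [add_mul, map_add, ha, hb, add_zero]
    | smul c a _ ha => rw [smul_mul_assoc, map_smul, ha, smul_zero]
  exact htrAA (hfin A hA)
end

section
/- Let S be a linear subspace of the space of linear endomorphisms of ℝ², and let 𝔤 be the Lie algebra (under the commutator bracket) generated by S, with derived algebra 𝔤' = [𝔤, 𝔤]. There exists a nondegenerate symmetric bilinear form g₀ on ℝ² with 𝔤' ⊆ 𝔰𝔬(g₀) if and only if [X, Y] = 0 for all X, Y ∈ S; in that case, every nondegenerate symmetric bilinear form g₀ on ℝ² satisfies 𝔤' ⊆ 𝔰𝔬(g₀). -/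
attribute [local instance 100] LieRing.ofAssociativeRing

open Matrix

noncomputable section StmtAux

private def Jm : Matrix (Fin 2) (Fin 2) ℝ := !![0, 1; -1, 0]

private lemma antisym_eq (M : Matrix (Fin 2) (Fin 2) ℝ) (h : Mᵀ = -M) : M = M 0 1 • Jm := by
  have h00 := congrFun (congrFun h 0) 0
  have h11 := congrFun (congrFun h 1) 1
  have h10 := congrFun (congrFun h 1) 0
  simp only [Matrix.transpose_apply, Matrix.neg_apply] at h00 h11 h10
  ext i j
  fin_cases i <;> fin_cases j <;>
    simp [Jm, Matrix.smul_apply] <;> linarith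

private lemma so_struct (G : Matrix (Fin 2) (Fin 2) ℝ) (hdet : G.det ≠ 0)
    (A : Matrix (Fin 2) (Fin 2) ℝ) (hG : Gᵀ = G) (h : Aᵀ * G + G * A = 0) :
    ∃ s : ℝ, A = s • (G.adjugate * Jm) := by
  have hanti : (G * A)ᵀ = -(G * A) := by
    rw [Matrix.transpose_mul, hG]
    have := eq_neg_of_add_eq_zero_left h
    rw [this]
  have h2 : G * A = (G * A) 0 1 • Jm := antisym_eq _ hanti
  refine ⟨G.det⁻¹ * (G * A) 0 1, ?_⟩
  have h3 : G.adjugate * (G * A) = G.det • A := by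
    rw [← Matrix.mul_assoc, Matrix.adjugate_mul, Matrix.smul_mul, Matrix.one_mul]
  rw [h2, Matrix.mul_smul] at h3
  have h4 := congrArg (fun M => G.det⁻¹ • M) h3
  simp only [smul_smul] at h4
  rw [inv_mul_cancel₀ hdet, one_smul] at h4
  exact h4.symm

private lemma trace_sq (M : Matrix (Fin 2) (Fin 2) ℝ) :
    (M * M).trace = M.trace ^ 2 - 2 * M.det := by
  simp [Matrix.trace_fin_two, Matrix.mul_apply, Fin.sum_univ_two, Matrix.det_fin_two]
  ring

private lemma trace_W2 (G : Matrix (Fin 2) (Fin 2) ℝ) (hG : Gᵀ = G) :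
    ((G.adjugate * Jm) * (G.adjugate * Jm)).trace = -(2 * G.det) := by
  have hsym : G 1 0 = G 0 1 := by simpa using congrFun (congrFun hG 0) 1
  have ht : (G.adjugate * Jm).trace = 0 := by
    simp [Matrix.trace_fin_two, Matrix.mul_apply, Fin.sum_univ_two, Jm,
      Matrix.adjugate_fin_two, hsym]
  have hd : (G.adjugate * Jm).det = G.det := by
    rw [Matrix.det_mul, Matrix.det_adjugate]
    simp [Jm, Matrix.det_fin_two_of]
  rw [trace_sq, ht, hd]; ring

private lemma tr_aux1 (W X : Matrix (Fin 2) (Fin 2) ℝ) (s : ℝ) :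
    (W * (X * (s • W) - (s • W) * X)).trace = 0 := by
  rw [Matrix.mul_sub, Matrix.trace_sub]
  simp only [Matrix.mul_smul, Matrix.smul_mul, Matrix.trace_smul]
  rw [← Matrix.mul_assoc, Matrix.trace_mul_comm (W*X) W]
  ring

private lemma tr_aux2 (C X Y : Matrix (Fin 2) (Fin 2) ℝ) (hY : C * Y = Y * C) :
    (C * (X * Y - Y * X)).trace = 0 := by
  rw [Matrix.mul_sub, Matrix.trace_sub]
  have : (C * (X * Y)).trace = (C * (Y * X)).trace := by
    calc (C * (X * Y)).trace = ((C * X) * Y).trace := by rw [Matrix.mul_assoc]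
      _ = (Y * (C * X)).trace := (Matrix.trace_mul_comm _ _).symm
      _ = ((Y * C) * X).trace := by rw [Matrix.mul_assoc]
      _ = ((C * Y) * X).trace := by rw [hY]
      _ = (C * (Y * X)).trace := by rw [Matrix.mul_assoc]
  rw [this]; ring

private lemma key_matrix (G X Y : Matrix (Fin 2) (Fin 2) ℝ) (hG : Gᵀ = G) (hdet : G.det ≠ 0)
    (hC : (X*Y - Y*X)ᵀ * G + G * (X*Y - Y*X) = 0)
    (hDX : (X*(X*Y - Y*X) - (X*Y - Y*X)*X)ᵀ * G + G * (X*(X*Y - Y*X) - (X*Y - Y*X)*X) = 0)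
    (hDY : (Y*(X*Y - Y*X) - (X*Y - Y*X)*Y)ᵀ * G + G * (Y*(X*Y - Y*X) - (X*Y - Y*X)*Y) = 0) :
    X*Y - Y*X = 0 := by
  set W := G.adjugate * Jm with hW
  set C := X*Y - Y*X with hCdef
  obtain ⟨s, hs⟩ := so_struct G hdet C hG hC
  have comm : ∀ Z : Matrix (Fin 2) (Fin 2) ℝ,
      (Z*C - C*Z)ᵀ * G + G * (Z*C - C*Z) = 0 → Z * C = C * Z := by
    intro Z hZ
    obtain ⟨r, hr⟩ := so_struct G hdet (Z*C - C*Z) hG hZ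
    have h1 : (W * (Z*C - C*Z)).trace = 0 := by
      rw [hs]; exact tr_aux1 W Z s
    have h2 : (W * (Z*C - C*Z)).trace = r * (-(2*G.det)) := by
      rw [hr, Matrix.mul_smul, Matrix.trace_smul, trace_W2 G hG]; simp
    have hr0 : r = 0 := by
      rw [h1] at h2
      rcases mul_eq_zero.mp h2.symm with h | h
      · exact h
      · exact absurd (by linarith : G.det = 0) hdet
    have : Z*C - C*Z = 0 := by rw [hr, hr0, zero_smul]
    linear_combination (norm := noncomm_ring) this
  have hXC := comm X hDX
  have hYC := comm Y hDY
  have h3 : (C * C).trace = 0 := by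
    conv_lhs => rw [hCdef]
    exact tr_aux2 C X Y hYC.symm
  have h4 : (C * C).trace = s^2 * (-(2*G.det)) := by
    rw [hs, Matrix.smul_mul, Matrix.mul_smul, Matrix.trace_smul, Matrix.trace_smul,
      trace_W2 G hG]
    simp; ring
  have hs0 : s = 0 := by
    rw [h3] at h4
    rcases mul_eq_zero.mp h4.symm with h | h
    · exact pow_eq_zero_iff (by norm_num) |>.mp h
    · exact absurd (by linarith : G.det = 0) hdet
  rw [hs, hs0, zero_smul]

private noncomputable def Gm (g₀ : (Fin 2 → ℝ) →ₗ[ℝ] (Fin 2 → ℝ) →ₗ[ℝ] ℝ) :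
    Matrix (Fin 2) (Fin 2) ℝ :=
  Matrix.of fun i j => g₀ (Pi.single i 1) (Pi.single j 1)

private lemma vdec (v : Fin 2 → ℝ) :
    v = v 0 • (Pi.single 0 1 : Fin 2 → ℝ) + v 1 • (Pi.single 1 1 : Fin 2 → ℝ) := by
  funext i; fin_cases i <;> simp

private lemma g0_eq (g₀ : (Fin 2 → ℝ) →ₗ[ℝ] (Fin 2 → ℝ) →ₗ[ℝ] ℝ) (v w : Fin 2 → ℝ) :
    g₀ v w = v ⬝ᵥ (Gm g₀ *ᵥ w) := by
  conv_lhs => rw [vdec v, vdec w]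
  simp only [map_add, _root_.map_smul, LinearMap.add_apply, LinearMap.smul_apply, smul_eq_mul]
  simp [Gm, Matrix.mulVec, dotProduct, Fin.sum_univ_two]
  ring

private lemma Gm_symm (g₀ : (Fin 2 → ℝ) →ₗ[ℝ] (Fin 2 → ℝ) →ₗ[ℝ] ℝ)
    (hsym : ∀ v w, g₀ v w = g₀ w v) : (Gm g₀)ᵀ = Gm g₀ := by
  ext i j; simp [Gm, Matrix.transpose_apply]; exact hsym _ _

private lemma Gm_det (g₀ : (Fin 2 → ℝ) →ₗ[ℝ] (Fin 2 → ℝ) →ₗ[ℝ] ℝ)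
    (hnd : ∀ v : Fin 2 → ℝ, (∀ w, g₀ v w = 0) → v = 0)
    (hsym : ∀ v w, g₀ v w = g₀ w v) : (Gm g₀).det ≠ 0 := by
  intro h0
  obtain ⟨v, hv, hker⟩ := Matrix.exists_mulVec_eq_zero_iff.mpr h0
  refine hv (hnd v fun w => ?_)
  rw [hsym, g0_eq, hker, dotProduct_zero]

private lemma so_matrix (g₀ : (Fin 2 → ℝ) →ₗ[ℝ] (Fin 2 → ℝ) →ₗ[ℝ] ℝ)
    (A : Module.End ℝ (Fin 2 → ℝ))
    (h : ∀ v w, g₀ (A v) w + g₀ v (A w) = 0) :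
    (LinearMap.toMatrix' A)ᵀ * Gm g₀ + Gm g₀ * (LinearMap.toMatrix' A) = 0 := by
  set M := LinearMap.toMatrix' A with hM
  have hA : ∀ v, A v = M *ᵥ v := by
    intro v; rw [hM, ← Matrix.toLin'_apply, Matrix.toLin'_toMatrix']
  ext i j
  have := h (Pi.single i 1) (Pi.single j 1)
  rw [g0_eq, g0_eq, hA, hA] at this
  simp only [Matrix.mulVec_single, mul_one] at this
  simp only [Matrix.add_apply, Matrix.mul_apply, Matrix.transpose_apply, Matrix.zero_apply,
    Fin.sum_univ_two]
  simp only [Matrix.mulVec, dotProduct, Fin.sum_univ_two, Pi.single_apply] at this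
  clear hA hM
  fin_cases i <;> fin_cases j <;> simp_all

private lemma derived_trivial (S : Submodule ℝ (Module.End ℝ (Fin 2 → ℝ)))
    (𝔤 : LieSubalgebra ℝ (Module.End ℝ (Fin 2 → ℝ)))
    (h𝔤 : 𝔤 = LieSubalgebra.lieSpan ℝ (Module.End ℝ (Fin 2 → ℝ)) S)
    (𝔤' : Submodule ℝ (Module.End ℝ (Fin 2 → ℝ)))
    (h𝔤' : 𝔤' = Submodule.span ℝ {z | ∃ x ∈ 𝔤, ∃ y ∈ 𝔤, z = ⁅x, y⁆})
    (hcomm : ∀ X ∈ S, ∀ Y ∈ S, ⁅X, Y⁆ = 0) :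
    ∀ A ∈ 𝔤', A = 0 := by
  have hlie : ∀ {x y : Module.End ℝ (Fin 2 → ℝ)}, x ∈ S.carrier → y ∈ S.carrier →
      ⁅x, y⁆ ∈ S.carrier := by
    intro x y hx hy
    have h0 : ⁅x, y⁆ = 0 := hcomm x hx y hy
    rw [h0]
    exact S.zero_mem
  set K : LieSubalgebra ℝ (Module.End ℝ (Fin 2 → ℝ)) := { S with lie_mem' := hlie } with hK
  have hSK : (↑S : Set (Module.End ℝ (Fin 2 → ℝ))) ⊆ ↑K := fun x hx => hx
  have h𝔤K : ∀ x ∈ 𝔤, x ∈ S := by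
    intro x hx
    rw [h𝔤] at hx
    exact LieSubalgebra.lieSpan_le.mpr hSK hx
  have hsub : {z | ∃ x ∈ 𝔤, ∃ y ∈ 𝔤, z = ⁅x, y⁆} ⊆
      (↑(⊥ : Submodule ℝ (Module.End ℝ (Fin 2 → ℝ))) : Set _) := by
    rintro z ⟨x, hx, y, hy, rfl⟩
    simp [hcomm x (h𝔤K x hx) y (h𝔤K y hy)]
  intro A hA
  rw [h𝔤'] at hA
  have := Submodule.span_le.mpr hsub hA
  simpa using this

end StmtAux

/-- Let `S` be a linear subspace of the endomorphisms of `ℝ²` and let `𝔤` be the Lie algebra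
generated by `S`, with derived algebra `𝔤' = [𝔤, 𝔤]` (the span of all brackets of elements of
`𝔤`). There exists a nondegenerate symmetric bilinear form `g₀` on `ℝ²` with `𝔤' ⊆ 𝔰𝔬(g₀)`
if and only if `[X, Y] = 0` for all `X, Y ∈ S`; in that case every nondegenerate symmetric
bilinear form `g₀` on `ℝ²` satisfies `𝔤' ⊆ 𝔰𝔬(g₀)`. -/
theorem stmt_19 (S : Submodule ℝ (Module.End ℝ (Fin 2 → ℝ)))
    (𝔤 : LieSubalgebra ℝ (Module.End ℝ (Fin 2 → ℝ)))
    (h𝔤 : 𝔤 = LieSubalgebra.lieSpan ℝ (Module.End ℝ (Fin 2 → ℝ)) S)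
    (𝔤' : Submodule ℝ (Module.End ℝ (Fin 2 → ℝ)))
    (h𝔤' : 𝔤' = Submodule.span ℝ {z | ∃ x ∈ 𝔤, ∃ y ∈ 𝔤, z = ⁅x, y⁆}) :
    ((∃ g₀ : (Fin 2 → ℝ) →ₗ[ℝ] (Fin 2 → ℝ) →ₗ[ℝ] ℝ,
        (∀ v : Fin 2 → ℝ, (∀ w : Fin 2 → ℝ, g₀ v w = 0) → v = 0) ∧
        (∀ v w : Fin 2 → ℝ, g₀ v w = g₀ w v) ∧
        (∀ A ∈ 𝔤', ∀ v w : Fin 2 → ℝ, g₀ (A v) w + g₀ v (A w) = 0)) ↔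
      (∀ X ∈ S, ∀ Y ∈ S, ⁅X, Y⁆ = 0)) ∧
    ((∀ X ∈ S, ∀ Y ∈ S, ⁅X, Y⁆ = 0) →
      ∀ g₀ : (Fin 2 → ℝ) →ₗ[ℝ] (Fin 2 → ℝ) →ₗ[ℝ] ℝ,
        (∀ v : Fin 2 → ℝ, (∀ w : Fin 2 → ℝ, g₀ v w = 0) → v = 0) →
        (∀ v w : Fin 2 → ℝ, g₀ v w = g₀ w v) →
        ∀ A ∈ 𝔤', ∀ v w : Fin 2 → ℝ, g₀ (A v) w + g₀ v (A w) = 0) := by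
  constructor
  · constructor
    · rintro ⟨g₀, hnd, hsym, hso⟩ X hX Y hY
      have hXg : X ∈ 𝔤 := by
        rw [h𝔤]; exact LieSubalgebra.subset_lieSpan hX
      have hYg : Y ∈ 𝔤 := by
        rw [h𝔤]; exact LieSubalgebra.subset_lieSpan hY
      have hCg : ⁅X, Y⁆ ∈ 𝔤 := 𝔤.lie_mem hXg hYg
      have hC' : ⁅X, Y⁆ ∈ 𝔤' := by
        rw [h𝔤']; exact Submodule.subset_span ⟨X, hXg, Y, hYg, rfl⟩
      have hDX' : ⁅X, ⁅X, Y⁆⁆ ∈ 𝔤' := by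
        rw [h𝔤']; exact Submodule.subset_span ⟨X, hXg, ⁅X, Y⁆, hCg, rfl⟩
      have hDY' : ⁅Y, ⁅X, Y⁆⁆ ∈ 𝔤' := by
        rw [h𝔤']; exact Submodule.subset_span ⟨Y, hYg, ⁅X, Y⁆, hCg, rfl⟩
      set MX := LinearMap.toMatrix' (X : (Fin 2 → ℝ) →ₗ[ℝ] Fin 2 → ℝ) with hMX
      set MY := LinearMap.toMatrix' (Y : (Fin 2 → ℝ) →ₗ[ℝ] Fin 2 → ℝ) with hMY
      have e1 : LinearMap.toMatrix' (⁅X, Y⁆ : Module.End ℝ (Fin 2 → ℝ)) = MX*MY - MY*MX := by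
        rw [Ring.lie_def, map_sub, LinearMap.toMatrix'_mul, LinearMap.toMatrix'_mul]
      have e2 : LinearMap.toMatrix' (⁅X, ⁅X, Y⁆⁆ : Module.End ℝ (Fin 2 → ℝ)) =
          MX*(MX*MY - MY*MX) - (MX*MY - MY*MX)*MX := by
        rw [Ring.lie_def, map_sub, LinearMap.toMatrix'_mul, LinearMap.toMatrix'_mul, e1]
      have e3 : LinearMap.toMatrix' (⁅Y, ⁅X, Y⁆⁆ : Module.End ℝ (Fin 2 → ℝ)) =
          MY*(MX*MY - MY*MX) - (MX*MY - MY*MX)*MY := by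
        rw [Ring.lie_def, map_sub, LinearMap.toMatrix'_mul, LinearMap.toMatrix'_mul, e1]
      have m1 := so_matrix g₀ _ (hso _ hC')
      have m2 := so_matrix g₀ _ (hso _ hDX')
      have m3 := so_matrix g₀ _ (hso _ hDY')
      rw [e1] at m1
      rw [e2] at m2
      rw [e3] at m3
      have hzero : MX*MY - MY*MX = 0 :=
        key_matrix (Gm g₀) MX MY (Gm_symm g₀ hsym) (Gm_det g₀ hnd hsym) m1 m2 m3
      have : LinearMap.toMatrix' (⁅X, Y⁆ : Module.End ℝ (Fin 2 → ℝ)) = 0 := by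
        rw [e1, hzero]
      exact (LinearEquiv.map_eq_zero_iff _).mp this
    · intro hcomm
      refine ⟨LinearMap.mk₂ ℝ (fun v w => v 0 * w 0 + v 1 * w 1)
        (by intros; simp; ring) (by intros; simp; ring)
        (by intros; simp; ring) (by intros; simp; ring), ?_, ?_, ?_⟩
      · intro v h
        have h0 := h (Pi.single 0 1)
        have h1 := h (Pi.single 1 1)
        simp [LinearMap.mk₂_apply] at h0 h1
        funext i; fin_cases i <;> simp [h0, h1]
      · intro v w; simp [LinearMap.mk₂_apply]; ring
      · intro A hA v w
        rw [derived_trivial S 𝔤 h𝔤 𝔤' h𝔤' hcomm A hA]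
        simp
  · intro hcomm g₀ _ _ A hA v w
    rw [derived_trivial S 𝔤 h𝔤 𝔤' h𝔤' hcomm A hA]
    simp
end
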